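/- arXiv:2208.03265 — 5 statements merged into one kernel-verified Lean document; each statement's English description precedes it below -/
import Mathlib

section
/- False alarm probability bound by change of measure: Assume supp q ⊆ supp p. Then under P_p (all X_i i.i.d. with law p), for every threshold h ∈ ℝ, P_p(T_1 < ∞) ≤ e^{−h}. -/
/-!
Change of measure. Split `{T₁ < ∞}` into the disjoint events `{T₁ = n}`; each is determined by
the first `n` coordinates, i.e. by a set of words `v` of length `n` on which `S_n ≥ h`, that is,
`∏ p(vᵢ) ≤ e^{-h} ∏ q(vᵢ)`. Summing over the words, `P_p(T₁ = n) ≤ e^{-h} P_q(T₁ = n)`, and the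
`P_q`-masses of the disjoint events add up to at most `1`.
-/

open MeasureTheory ProbabilityTheory Real Filter
open scoped ENNReal NNReal

noncomputable section

namespace QCPD

variable {X : Type*}

/-- The measure on `X` induced by a probability mass function `p`. -/
def pmfMeasure [Fintype X] [MeasurableSpace X] (p : X → ℝ) : Measure X :=
  ∑ x : X, ENNReal.ofReal (p x) • Measure.dirac x

/-- `p` is a probability mass function on the finite type `X`. -/
def IsPMF [Fintype X] (p : X → ℝ) : Prop := (∀ x, 0 ≤ p x) ∧ ∑ x, p x = 1

/-- Under `P`, the coordinates of `Ω = ℕ → X` are independent and the `i`-th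
coordinate (representing `X_{i+1}`) has law given by the pmf `r i`.  For i.i.d.
pmfs this characterizes the infinite product measure. -/
def HasLaw [Fintype X] [MeasurableSpace X] (P : Measure (ℕ → X)) (r : ℕ → X → ℝ) : Prop :=
  iIndepFun (fun i (ω : ℕ → X) => ω i) P ∧
    ∀ i, P.map (fun ω => ω i) = pmfMeasure (r i)

/-- The log-likelihood ratio `log (q x / p x)`, valued in the extended reals,
with the conventions `log 0 = −∞` (and `log ∞ = ∞`). -/
def llr (p q : X → ℝ) (x : X) : EReal :=
  ENNReal.log (ENNReal.ofReal (q x) / ENNReal.ofReal (p x))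

/-- `S_n = ∑_{i=1}^n Z_i` where `Z_i = log (q (X_i) / p (X_i))`; the `i`-th
coordinate of `ω` represents `X_{i+1}`. -/
def llrSum (p q : X → ℝ) (n : ℕ) (ω : ℕ → X) : EReal :=
  ∑ i ∈ Finset.range n, llr p q (ω i)

/-- `T₁ = inf {n ≥ 1 : S_n ≥ h}`, with value `∞` if no such `n` exists. -/
def T1 (p q : X → ℝ) (h : ℝ) (ω : ℕ → X) : ℕ∞ :=
  sInf ((↑) '' {n : ℕ | 1 ≤ n ∧ (h : EReal) ≤ llrSum p q n ω})

/-- Kullback–Leibler divergence `D(q‖p) = ∑_{x ∈ supp q} q x · log (q x / p x)`. -/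
def KL [Fintype X] (q p : X → ℝ) : ℝ :=
  ∑ x ∈ Finset.univ.filter (fun x => 0 < q x), q x * Real.log (q x / p x)

end QCPD

theorem ENNReal.log_prod {ι : Type*} (s : Finset ι) (a : ι → ℝ≥0∞) :
    ENNReal.log (∏ i ∈ s, a i) = ∑ i ∈ s, ENNReal.log (a i) := by
  classical
  induction s using Finset.induction_on with
  | empty => simp
  | insert i s hi ih => rw [Finset.prod_insert hi, Finset.sum_insert hi, ENNReal.log_mul_add, ih]

theorem ENNReal.prod_le_exp_neg_mul_prod {ι : Type*} (s : Finset ι) (a b : ι → ℝ≥0∞) {h : ℝ}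
    (hh : (h : EReal) ≤ ∑ i ∈ s, ENNReal.log (a i / b i)) :
    ∏ i ∈ s, b i ≤ ENNReal.ofReal (Real.exp (-h)) * ∏ i ∈ s, a i := by
  -- no positivity or finiteness of `b` is needed: `b * (a / b) ≤ a` holds in `ℝ≥0∞` also for
  -- `b = 0` and `b = ⊤`
  have hratio : ENNReal.ofReal (Real.exp h) ≤ ∏ i ∈ s, a i / b i := by
    rwa [← ENNReal.log_le_log_iff, ENNReal.log_prod, ENNReal.log_ofReal_of_pos (Real.exp_pos h),
      Real.log_exp]
  have hcancel : ENNReal.ofReal (Real.exp (-h)) * ENNReal.ofReal (Real.exp h) = 1 := by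
    rw [← ENNReal.ofReal_mul (Real.exp_nonneg _), ← Real.exp_add, neg_add_cancel, Real.exp_zero,
      ENNReal.ofReal_one]
  calc ∏ i ∈ s, b i
      = ENNReal.ofReal (Real.exp (-h)) * ((∏ i ∈ s, b i) * ENNReal.ofReal (Real.exp h)) := by
        rw [mul_comm _ (ENNReal.ofReal _), ← mul_assoc, hcancel, one_mul]
    _ ≤ ENNReal.ofReal (Real.exp (-h)) * ((∏ i ∈ s, b i) * ∏ i ∈ s, a i / b i) := by gcongr
    _ ≤ ENNReal.ofReal (Real.exp (-h)) * ∏ i ∈ s, a i := by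
        rw [← Finset.prod_mul_distrib]
        gcongr with i
        exact ENNReal.mul_div_le

theorem Set.preimage_image_eq_of_saturated {α β : Type*} {f : α → β} {s : Set α}
    (hs : ∀ x y, f x = f y → x ∈ s → y ∈ s) : f ⁻¹' (f '' s) = s :=
  (Set.subset_preimage_image f s).antisymm' fun _ ⟨x, hx, hxy⟩ => hs x _ hxy hx

namespace QCPD

section PmfMeasure

variable [Fintype X] [MeasurableSpace X]

theorem pmfMeasure_singleton [MeasurableSingletonClass X] (p : X → ℝ) (x : X) :
    pmfMeasure p {x} = ENNReal.ofReal (p x) := by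
  classical
  simp [pmfMeasure, Measure.finsetSum_apply, Set.indicator_apply]

instance (p : X → ℝ) : IsFiniteMeasure (pmfMeasure p) := by
  constructor
  simp [pmfMeasure, Measure.finsetSum_apply]

theorem isProbabilityMeasure_pmfMeasure {q : X → ℝ} (hq : IsPMF q) :
    IsProbabilityMeasure (pmfMeasure q) := by
  constructor
  rw [pmfMeasure, Measure.finsetSum_apply]
  simp only [Measure.smul_apply, measure_univ, smul_eq_mul, mul_one]
  rw [← ENNReal.ofReal_sum_of_nonneg fun x _ => hq.1 x, hq.2, ENNReal.ofReal_one]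

theorem pi_pmfMeasure_le_exp_neg_mul [MeasurableSingletonClass X] {ι : Type*} [Fintype ι]
    (p q : X → ℝ) {h : ℝ} {B : Set (ι → X)}
    (hB : ∀ v ∈ B, (h : EReal) ≤ ∑ i, llr p q (v i)) :
    Measure.pi (fun _ => pmfMeasure p) B ≤
      ENNReal.ofReal (Real.exp (-h)) * Measure.pi (fun _ => pmfMeasure q) B := by
  rw [← (Set.toFinite B).coe_toFinset, ← sum_measure_singleton, ← sum_measure_singleton,
    Finset.mul_sum]
  refine Finset.sum_le_sum fun v hv => ?_
  simp only [Measure.pi_singleton, pmfMeasure_singleton]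
  exact ENNReal.prod_le_exp_neg_mul_prod _ _ _ (hB v ((Set.toFinite B).mem_toFinset.1 hv))

theorem HasLaw.map_restrict {P : Measure (ℕ → X)} {r : ℕ → X → ℝ} (hP : HasLaw P r)
    (I : Finset ℕ) : P.map I.restrict = Measure.pi (fun i : I => pmfMeasure (r i)) := by
  have := (iIndepFun_iff_finset.1 hP.1 I).map_fun_eq_pi_map
    fun i => (measurable_pi_apply _).aemeasurable
  simp only [hP.2] at this
  exact this

theorem hasLaw_infinitePi (q : X → ℝ) [IsProbabilityMeasure (pmfMeasure q)] :
    HasLaw (Measure.infinitePi fun _ => pmfMeasure q) (fun _ => q) :=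
  ⟨iIndepFun_infinitePi (X := fun _ => id) fun _ => measurable_id,
    Measure.infinitePi_map_eval _⟩

theorem measure_le_exp_neg_mul_of_le_llrSum [DiscreteMeasurableSpace X] {p q : X → ℝ} {h : ℝ}
    {P Q : Measure (ℕ → X)} (hP : HasLaw P fun _ => p) (hQ : HasLaw Q fun _ => q) {n : ℕ}
    {E : Set (ℕ → X)} (hE : ∀ ω ω', (∀ i < n, ω i = ω' i) → ω ∈ E → ω' ∈ E)
    (hEh : ∀ ω ∈ E, (h : EReal) ≤ llrSum p q n ω) :
    P E ≤ ENNReal.ofReal (Real.exp (-h)) * Q E := by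
  have hEB : (Finset.range n).restrict ⁻¹' ((Finset.range n).restrict '' E) = E :=
    Set.preimage_image_eq_of_saturated fun ω ω' hωω' =>
      hE ω ω' fun i hi => congrFun hωω' ⟨i, Finset.mem_range.2 hi⟩
  rw [← hEB, ← Measure.map_apply (Finset.measurable_restrict _) (.of_discrete),
    ← Measure.map_apply (Finset.measurable_restrict _) (.of_discrete), hP.map_restrict,
    hQ.map_restrict]
  refine pi_pmfMeasure_le_exp_neg_mul p q ?_
  rintro _ ⟨ω, hω, rfl⟩
  exact (hEh ω hω).trans_eq (Finset.sum_coe_sort _ _).symm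

end PmfMeasure

section Crossing

variable (p q : X → ℝ) (h : ℝ)

def llrCrossing (n : ℕ) : Set (ℕ → X) := {ω | 1 ≤ n ∧ (h : EReal) ≤ llrSum p q n ω}

theorem setOf_T1_ne_top : {ω | T1 p q h ω ≠ ⊤} = ⋃ n, llrCrossing p q h n := by
  ext ω
  simp [T1, llrCrossing, sInf_eq_top]

theorem llrSum_congr {n : ℕ} {ω ω' : ℕ → X} (hω : ∀ i < n, ω i = ω' i) :
    llrSum p q n ω = llrSum p q n ω' :=
  Finset.sum_congr rfl fun i hi => by rw [hω i (Finset.mem_range.1 hi)]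

theorem llrSum_eq_sum_restrict (n : ℕ) (ω : ℕ → X) :
    llrSum p q n ω = ∑ i, llr p q ((Finset.range n).restrict ω i) :=
  (Finset.sum_coe_sort _ _).symm

theorem measurableSet_llrCrossing [Fintype X] [MeasurableSpace X] [DiscreteMeasurableSpace X]
    (n : ℕ) : MeasurableSet (llrCrossing p q h n) := by
  have : llrCrossing p q h n = (Finset.range n).restrict ⁻¹'
      {v | 1 ≤ n ∧ (h : EReal) ≤ ∑ i, llr p q (v i)} := by
    ext ω
    rw [Set.mem_preimage, llrCrossing, Set.mem_ofPred, Set.mem_ofPred, llrSum_eq_sum_restrict]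
  exact this ▸ MeasurableSet.of_discrete.preimage (Finset.measurable_restrict _)

theorem mem_disjointed_llrCrossing_congr {n : ℕ} {ω ω' : ℕ → X} (hω : ∀ i < n, ω i = ω' i)
    (hE : ω ∈ disjointed (llrCrossing p q h) n) : ω' ∈ disjointed (llrCrossing p q h) n := by
  have hcross : ∀ k ≤ n, (ω ∈ llrCrossing p q h k ↔ ω' ∈ llrCrossing p q h k) := fun k hk => by
    show (1 ≤ k ∧ _) ↔ (1 ≤ k ∧ _)
    rw [llrSum_congr p q fun i hi => hω i (hi.trans_le hk)]
  rw [disjointed_eq_inter_compl] at hE ⊢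
  simp only [Set.mem_inter_iff, Set.mem_iInter, Set.mem_compl_iff] at hE ⊢
  exact ⟨(hcross n le_rfl).1 hE.1, fun j hj hj' => hE.2 j hj ((hcross j hj.le).2 hj')⟩

end Crossing

theorem false_alarm_probability_bound_general
    [Fintype X] [MeasurableSpace X] [DiscreteMeasurableSpace X]
    (p q : X → ℝ) (hq : IsPMF q)
    (P : Measure (ℕ → X)) (hP : HasLaw P (fun _ => p))
    (h : ℝ) :
    P {ω | T1 p q h ω ≠ ⊤} ≤ ENNReal.ofReal (Real.exp (-h)) := by
  have := isProbabilityMeasure_pmfMeasure hq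
  set Q := Measure.infinitePi fun _ : ℕ => pmfMeasure q
  -- `E n = {T₁ = n}`
  set E := disjointed (llrCrossing p q h)
  have hE : ∀ n, MeasurableSet (E n) := .disjointed (measurableSet_llrCrossing p q h)
  calc P {ω | T1 p q h ω ≠ ⊤}
      = ∑' n, P (E n) := by
        rw [setOf_T1_ne_top, ← iUnion_disjointed, measure_iUnion (disjoint_disjointed _) hE]
    _ ≤ ∑' n, ENNReal.ofReal (Real.exp (-h)) * Q (E n) :=
        ENNReal.tsum_le_tsum fun n => measure_le_exp_neg_mul_of_le_llrSum hP (hasLaw_infinitePi q)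
          (fun _ _ hω => mem_disjointed_llrCrossing_congr p q h hω)
          fun ω hω => (disjointed_subset _ n hω).2
    _ = ENNReal.ofReal (Real.exp (-h)) * Q (⋃ n, E n) := by
        rw [ENNReal.tsum_mul_left, measure_iUnion (disjoint_disjointed _) hE]
    _ ≤ ENNReal.ofReal (Real.exp (-h)) := mul_le_of_le_one_right' prob_le_one

/-- **False alarm probability bound by change of measure.** If `supp q ⊆ supp p`,
then under the i.i.d.-`p` measure, for every threshold `h`,
`P_p(T₁ < ∞) ≤ e^{−h}`. -/
theorem false_alarm_probability_bound
    [Fintype X] [Nonempty X] [MeasurableSpace X] [DiscreteMeasurableSpace X]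
    (p q : X → ℝ) (hp : IsPMF p) (hq : IsPMF q)
    (hsupp : ∀ x, 0 < q x → 0 < p x)
    (P : Measure (ℕ → X)) [IsProbabilityMeasure P] (hP : HasLaw P (fun _ => p))
    (h : ℝ) :
    P {ω | T1 p q h ω ≠ ⊤} ≤ ENNReal.ofReal (Real.exp (-h)) :=
  false_alarm_probability_bound_general p q hq P hP h

end QCPD
end
end

section
/- Two-sided delay bound for the one-sided threshold test: Assume supp q ⊆ supp p, D := D(q‖p) > 0, and h ≥ 0. Then under P_q (all X_i i.i.d. with law q), T_1 < ∞ almost surely and h/D ≤ E[T_1] ≤ (h + C)/D, where C := max_{x ∈ supp q} log(q(x)/p(x)). -/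
/-!
The event `{i < T₁}` is determined by `X_1, …, X_i`, hence independent of `Z_{i+1}`, and
`S_{min(T₁, n)} = ∑_{i < n} 1{i < T₁} Z_{i+1}`; this gives Wald's identity
`E[S_{min(T₁, n)}] = D · ∑_{i < n} P(T₁ > i)` for the bounded times `min(T₁, n)`.
Before the crossing `S_k < h`, and the crossing step adds at most `C` (which is positive since
`D > 0`), so `S_{min(T₁, n)} ≤ h + C`, and the tail-sum formula `E[T₁] = ∑_i P(T₁ > i)` gives
`E[T₁] ≤ (h + C)/D`; in particular `T₁ < ∞` a.s. Since `|S_{min(T₁, n)}| ≤ K T₁` for a bound `K`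
on the `|Z_i|`, dominated convergence yields `E[S_{T₁}] = D · E[T₁]`, and `S_{T₁} ≥ h` gives
the lower bound.
-/

open MeasureTheory ProbabilityTheory Real Filter
open scoped ENNReal NNReal

noncomputable section

namespace QCPD

variable {X : Type*}

open Finset Topology

lemma range_filter_natCast_lt (t : ℕ∞) (n : ℕ) :
    (range n).filter (fun i : ℕ => (i : ℕ∞) < t) = range (min t n).toNat := by
  induction t using ENat.recTopCoe with
  | top => simp
  | coe m =>
    ext i
    rcases le_total m n with hmn | hnm
    · rw [min_eq_left (by exact_mod_cast hmn)]
      simp only [mem_filter, mem_range, Nat.cast_lt, ENat.toNat_natCast]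
      omega
    · rw [min_eq_right (by exact_mod_cast hnm)]
      simp only [mem_filter, mem_range, Nat.cast_lt, ENat.toNat_natCast]
      omega

lemma toENNReal_eq_tsum_ite (t : ℕ∞) :
    (t : ℝ≥0∞) = ∑' i : ℕ, if (i : ℕ∞) < t then 1 else 0 := by
  induction t using ENat.recTopCoe with
  | top => simp
  | coe m =>
    rw [tsum_eq_sum (s := range m) (fun i hi => by simpa using hi)]
    simp [Finset.filter_true_of_mem]

lemma toReal_toENNReal_eq_toNat (t : ℕ∞) : (t : ℝ≥0∞).toReal = t.toNat := by
  induction t using ENat.recTopCoe with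
  | top => simp
  | coe m => simp

lemma abs_sum_range_le {K : ℝ} {f : ℕ → ℝ} (hf : ∀ i, |f i| ≤ K) (m : ℕ) :
    |∑ i ∈ range m, f i| ≤ K * m := by
  calc |∑ i ∈ range m, f i| ≤ ∑ i ∈ range m, |f i| := abs_sum_le_sum_abs _ _
    _ ≤ ∑ _i ∈ range m, K := sum_le_sum fun i _ => hf i
    _ = K * m := by simp [mul_comm]

section RandomTime

variable {Ω : Type*} {τ : Ω → ℕ∞} {Z : ℕ → Ω → ℝ}

lemma sum_indicator_lt_eq_sum_range_min (n : ℕ) (ω : Ω) :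
    ∑ i ∈ range n, {ω | (i : ℕ∞) < τ ω}.indicator (Z i) ω =
      ∑ i ∈ range (min (τ ω) n).toNat, Z i ω := by
  simp only [← range_filter_natCast_lt, sum_filter, Set.indicator_apply, Set.mem_ofPred_eq]

variable [MeasurableSpace Ω] {P : Measure Ω}

lemma measurable_toENNReal_of_measurableSet_lt
    (hτ : ∀ i : ℕ, MeasurableSet {ω | (i : ℕ∞) < τ ω}) : Measurable fun ω => (τ ω : ℝ≥0∞) := by
  simp_rw [toENNReal_eq_tsum_ite]
  exact Measurable.tsum fun i => Measurable.ite (hτ i) measurable_const measurable_const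

lemma lintegral_toENNReal_eq_tsum (hτ : ∀ i : ℕ, MeasurableSet {ω | (i : ℕ∞) < τ ω}) :
    ∫⁻ ω, (τ ω : ℝ≥0∞) ∂P = ∑' i : ℕ, P {ω | (i : ℕ∞) < τ ω} := by
  simp_rw [toENNReal_eq_tsum_ite]
  rw [lintegral_tsum fun i =>
    (Measurable.ite (hτ i) measurable_const measurable_const).aemeasurable]
  congr 1 with i
  rw [← lintegral_indicator_one (hτ i)]
  simp only [Set.indicator_apply, Set.mem_ofPred_eq, Pi.one_apply]

lemma ae_ne_top_of_lintegral_ne_top (hτ : ∀ i : ℕ, MeasurableSet {ω | (i : ℕ∞) < τ ω})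
    (hfin : ∫⁻ ω, (τ ω : ℝ≥0∞) ∂P ≠ ⊤) : ∀ᵐ ω ∂P, τ ω ≠ ⊤ := by
  filter_upwards [ae_lt_top (measurable_toENNReal_of_measurableSet_lt hτ) hfin] with ω hω
  simpa using hω.ne

variable {μ : ℝ}

lemma integral_sum_range_min_eq (hZ : ∀ i, Integrable (Z i) P) (hmean : ∀ i, ∫ ω, Z i ω ∂P = μ)
    (hτ : ∀ i : ℕ, MeasurableSet {ω | (i : ℕ∞) < τ ω})
    (hind : ∀ i : ℕ, IndepFun (Z i) ({ω | (i : ℕ∞) < τ ω}.indicator (1 : Ω → ℝ)) P) (n : ℕ) :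
    ∫ ω, ∑ i ∈ range (min (τ ω) n).toNat, Z i ω ∂P =
      μ * ∑ i ∈ range n, P.real {ω | (i : ℕ∞) < τ ω} := by
  simp_rw [← sum_indicator_lt_eq_sum_range_min]
  rw [integral_finsetSum _ fun i _ => (hZ i).indicator (hτ i), mul_sum]
  refine sum_congr rfl fun i _ => ?_
  have hprod : {ω | (i : ℕ∞) < τ ω}.indicator (Z i) =
      Z i * {ω | (i : ℕ∞) < τ ω}.indicator 1 := by
    ext ω
    simp [Set.indicator_apply]
  rw [hprod, (hind i).integral_mul_eq_mul_integral (hZ i).aestronglyMeasurable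
    (measurable_const.indicator (hτ i)).aestronglyMeasurable, hmean,
    integral_indicator_one (hτ i)]

lemma integrable_sum_range_min (hZ : ∀ i, Integrable (Z i) P)
    (hτ : ∀ i : ℕ, MeasurableSet {ω | (i : ℕ∞) < τ ω}) (n : ℕ) :
    Integrable (fun ω => ∑ i ∈ range (min (τ ω) n).toNat, Z i ω) P := by
  simp_rw [← sum_indicator_lt_eq_sum_range_min]
  exact integrable_finsetSum _ fun i _ => (hZ i).indicator (hτ i)

lemma lintegral_le_of_sum_range_min_le [IsProbabilityMeasure P] (hZ : ∀ i, Integrable (Z i) P)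
    (hmean : ∀ i, ∫ ω, Z i ω ∂P = μ) (hτ : ∀ i : ℕ, MeasurableSet {ω | (i : ℕ∞) < τ ω})
    (hind : ∀ i : ℕ, IndepFun (Z i) ({ω | (i : ℕ∞) < τ ω}.indicator (1 : Ω → ℝ)) P)
    (hμ : 0 < μ) {c : ℝ} (hc : ∀ n : ℕ, ∀ᵐ ω ∂P, ∑ i ∈ range (min (τ ω) n).toNat, Z i ω ≤ c) :
    ∫⁻ ω, (τ ω : ℝ≥0∞) ∂P ≤ ENNReal.ofReal (c / μ) := by
  rw [lintegral_toENNReal_eq_tsum hτ]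
  refine ENNReal.tsum_le_of_sum_range_le fun n => ?_
  have hwald : μ * ∑ i ∈ range n, P.real {ω | (i : ℕ∞) < τ ω} ≤ c := by
    rw [← integral_sum_range_min_eq hZ hmean hτ hind n]
    simpa using integral_mono_ae (integrable_sum_range_min hZ hτ n) (integrable_const c) (hc n)
  calc ∑ i ∈ range n, P {ω | (i : ℕ∞) < τ ω}
      = ENNReal.ofReal (∑ i ∈ range n, P.real {ω | (i : ℕ∞) < τ ω}) := by
        rw [ENNReal.ofReal_sum_of_nonneg fun _ _ => measureReal_nonneg]
        simp [measureReal_def]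
    _ ≤ ENNReal.ofReal (c / μ) :=
        ENNReal.ofReal_le_ofReal ((le_div_iff₀ hμ).mpr (by linarith))

lemma integral_sum_range_toNat_eq {K : ℝ} (hK : ∀ i ω, |Z i ω| ≤ K)
    (hZ : ∀ i, Integrable (Z i) P) (hmean : ∀ i, ∫ ω, Z i ω ∂P = μ)
    (hτ : ∀ i : ℕ, MeasurableSet {ω | (i : ℕ∞) < τ ω})
    (hind : ∀ i : ℕ, IndepFun (Z i) ({ω | (i : ℕ∞) < τ ω}.indicator (1 : Ω → ℝ)) P)
    (hfin : ∫⁻ ω, (τ ω : ℝ≥0∞) ∂P ≠ ⊤) :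
    Integrable (fun ω => ∑ i ∈ range (τ ω).toNat, Z i ω) P ∧
      ∫ ω, ∑ i ∈ range (τ ω).toNat, Z i ω ∂P = μ * (∫⁻ ω, (τ ω : ℝ≥0∞) ∂P).toReal := by
  have hdom : Integrable (fun ω => K * ((τ ω).toNat : ℝ)) P := by
    simp_rw [← toReal_toENNReal_eq_toNat]
    exact (integrable_toReal_of_lintegral_ne_top
      (measurable_toENNReal_of_measurableSet_lt hτ).aemeasurable hfin).const_mul K
  have hlim : ∀ᵐ ω ∂P, Tendsto (fun n : ℕ => ∑ i ∈ range (min (τ ω) n).toNat, Z i ω) atTop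
      (𝓝 (∑ i ∈ range (τ ω).toNat, Z i ω)) := by
    filter_upwards [ae_ne_top_of_lintegral_ne_top hτ hfin] with ω hω
    refine tendsto_atTop_of_eventually_const (i₀ := (τ ω).toNat) fun n hn => ?_
    rw [min_eq_left ((ENat.le_natCast_iff.mpr ⟨_, (ENat.natCast_toNat hω).symm, hn⟩))]
  have hbound : ∀ n : ℕ, ∀ᵐ ω ∂P, ‖∑ i ∈ range (min (τ ω) n).toNat, Z i ω‖ ≤ K * (τ ω).toNat := by
    intro n
    filter_upwards [ae_ne_top_of_lintegral_ne_top hτ hfin] with ω hω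
    have hK0 : 0 ≤ K := (abs_nonneg _).trans (hK 0 ω)
    refine (abs_sum_range_le (hK · ω) _).trans (mul_le_mul_of_nonneg_left ?_ hK0)
    exact_mod_cast ENat.toNat_le_toNat (min_le_left _ _) hω
  have hint : Integrable (fun ω => ∑ i ∈ range (τ ω).toNat, Z i ω) P :=
    hdom.mono' (aestronglyMeasurable_of_tendsto_ae atTop
      (fun n => (integrable_sum_range_min hZ hτ n).aestronglyMeasurable) hlim)
      (ae_of_all _ fun ω => abs_sum_range_le (hK · ω) _)
  refine ⟨hint, tendsto_nhds_unique (tendsto_integral_of_dominated_convergence _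
    (fun n => (integrable_sum_range_min hZ hτ n).aestronglyMeasurable) hdom hbound hlim) ?_⟩
  simp_rw [integral_sum_range_min_eq hZ hmean hτ hind]
  refine Tendsto.const_mul μ ?_
  rw [lintegral_toENNReal_eq_tsum hτ] at hfin ⊢
  refine ((ENNReal.tendsto_toReal hfin).comp (ENNReal.tendsto_nat_tsum _)).congr fun n => ?_
  simp [ENNReal.toReal_sum fun i _ => ENNReal.ne_top_of_tsum_ne_top hfin i, measureReal_def]

end RandomTime

lemma dependsOn_indicator_setOf {ι : Type*} {α : ι → Type*} {M : Type*} [Zero M]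
    {P : (Π i, α i) → Prop} {s : Set ι} (hP : DependsOn P s) (c : M) :
    DependsOn ({x | P x}.indicator fun _ => c) s := by
  classical
  intro x y hxy
  simp only [Set.indicator_apply, Set.mem_ofPred_eq, hP hxy]

section Coordinates

variable {X : Type*} [MeasurableSpace X] [DiscreteMeasurableSpace X] [Countable X]
  {γ : Type*} [MeasurableSpace γ] [Nonempty γ]

lemma measurable_of_dependsOn_finset {g : (ℕ → X) → γ} {s : Finset ℕ}
    (hg : DependsOn g s) : Measurable g := by
  obtain ⟨g', rfl⟩ := dependsOn_iff_exists_comp.mp hg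
  exact Measurable.of_discrete.comp (measurable_pi_lambda _ fun j => measurable_pi_apply _)

lemma indepFun_coord_of_dependsOn_range {P : Measure (ℕ → X)}
    (hP : iIndepFun (fun i (ω : ℕ → X) => ω i) P) {β : Type*} [MeasurableSpace β]
    (f : X → β) {g : (ℕ → X) → γ} {i : ℕ} (hg : DependsOn g (range i)) :
    IndepFun (fun ω => f (ω i)) g P := by
  obtain ⟨g', rfl⟩ := dependsOn_iff_exists_comp.mp hg
  have hdisj : Disjoint {i} (range i) := by simp
  exact (hP.indepFun_finset {i} (range i) hdisj measurable_pi_apply).comp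
    (φ := fun u => f (u ⟨i, mem_singleton_self i⟩)) (ψ := g') Measurable.of_discrete
    Measurable.of_discrete

end Coordinates

section Threshold

variable {X : Type*} {p q : X → ℝ} {h : ℝ} {ω : ℕ → X}

lemma llr_eq_coe_log {x : X} (hqx : 0 < q x) (hpx : 0 < p x) :
    llr p q x = (Real.log (q x / p x) : EReal) := by
  rw [llr, ← ENNReal.ofReal_div_of_pos hpx, ENNReal.log_ofReal_of_pos (div_pos hqx hpx)]

lemma llrSum_eq_coe_sum (hsupp : ∀ x, 0 < q x → 0 < p x) (hω : ∀ i, 0 < q (ω i)) (n : ℕ) :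
    llrSum p q n ω = ((∑ i ∈ range n, Real.log (q (ω i) / p (ω i)) : ℝ) : EReal) := by
  induction n with
  | zero => simp [llrSum]
  | succ n ih =>
    rw [llrSum, sum_range_succ, ← llrSum, ih, sum_range_succ, EReal.coe_add,
      llr_eq_coe_log (hω n) (hsupp _ (hω n))]

lemma natCast_lt_T1_iff (i : ℕ) :
    (i : ℕ∞) < T1 p q h ω ↔ ∀ k, 1 ≤ k → (h : EReal) ≤ llrSum p q k ω → i < k := by
  rw [← ENat.add_one_le_iff (ENat.natCast_ne_top i), T1, le_sInf_iff]
  simp only [Set.forall_mem_image, Set.mem_ofPred_eq, and_imp]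
  exact forall_congr' fun k => by norm_cast

lemma dependsOn_natCast_lt_T1 (i : ℕ) :
    DependsOn (fun ω => (i : ℕ∞) < T1 p q h ω) (range i) := by
  have key : ∀ ω ω' : ℕ → X, (∀ j < i, ω j = ω' j) →
      (i : ℕ∞) < T1 p q h ω → (i : ℕ∞) < T1 p q h ω' := by
    intro ω ω' hωω' hlt
    rw [natCast_lt_T1_iff] at hlt ⊢
    intro k hk hhk
    by_contra! hki
    refine absurd (hlt k hk ?_) (by omega)
    rwa [llrSum, sum_congr rfl fun j hj => by rw [hωω' j ((mem_range.mp hj).trans_le hki)]]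
  intro ω ω' hωω'
  simp only [coe_range, Set.mem_Iio] at hωω'
  exact propext ⟨key ω ω' hωω', key ω' ω fun j hj => (hωω' j hj).symm⟩

lemma le_llrSum_toNat_T1 (hT : T1 p q h ω ≠ ⊤) :
    (h : EReal) ≤ llrSum p q (T1 p q h ω).toNat ω := by
  have hne : ((↑) '' {n : ℕ | 1 ≤ n ∧ (h : EReal) ≤ llrSum p q n ω} : Set ℕ∞).Nonempty := by
    by_contra hempty
    exact hT (by simp [T1, Set.not_nonempty_iff_eq_empty.mp hempty])
  obtain ⟨k, ⟨-, hk⟩, hkT⟩ := csInf_mem hne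
  rwa [T1, ← hkT, ENat.toNat_natCast]

lemma sum_range_min_T1_le {C : ℝ} (hsupp : ∀ x, 0 < q x → 0 < p x) (hω : ∀ i, 0 < q (ω i))
    (hh : 0 ≤ h) (hC : ∀ x, 0 < q x → Real.log (q x / p x) ≤ C) (hC0 : 0 ≤ C) (n : ℕ) :
    ∑ i ∈ range (min (T1 p q h ω) n).toNat, Real.log (q (ω i) / p (ω i)) ≤ h + C := by
  set m := (min (T1 p q h ω) n).toNat
  rcases Nat.eq_zero_or_pos m with hm | hm
  · simpa [hm] using add_nonneg hh hC0
  have hmT : ((m - 1 : ℕ) : ℕ∞) < T1 p q h ω :=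
    calc ((m - 1 : ℕ) : ℕ∞) < m := by exact_mod_cast Nat.sub_lt hm one_pos
      _ ≤ min (T1 p q h ω) n := ENat.natCast_toNat_le_self _
      _ ≤ T1 p q h ω := min_le_left _ _
  have hbelow : ∑ i ∈ range (m - 1), Real.log (q (ω i) / p (ω i)) ≤ h := by
    rcases Nat.eq_zero_or_pos (m - 1) with h0 | h0
    · simp [h0, hh]
    · by_contra! hlt
      refine lt_irrefl (m - 1) ((natCast_lt_T1_iff (m - 1)).mp hmT (m - 1) h0 ?_)
      rw [llrSum_eq_coe_sum hsupp hω]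
      exact_mod_cast hlt.le
  rw [← Nat.sub_add_cancel hm, sum_range_succ]
  linarith [hC _ (hω (m - 1))]

end Threshold

section Independence

variable {X : Type*} [MeasurableSpace X] [DiscreteMeasurableSpace X] [Countable X]
  {p q : X → ℝ} {h : ℝ}

lemma measurableSet_natCast_lt_T1 (i : ℕ) : MeasurableSet {ω | (i : ℕ∞) < T1 p q h ω} :=
  measurableSet_setOfPred.mpr (measurable_of_dependsOn_finset (dependsOn_natCast_lt_T1 i))

lemma indepFun_log_indicator_lt_T1 {P : Measure (ℕ → X)}
    (hP : iIndepFun (fun i (ω : ℕ → X) => ω i) P) (i : ℕ) :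
    IndepFun (fun ω => Real.log (q (ω i) / p (ω i)))
      ({ω | (i : ℕ∞) < T1 p q h ω}.indicator (1 : (ℕ → X) → ℝ)) P :=
  indepFun_coord_of_dependsOn_range hP (fun x => Real.log (q x / p x))
    (dependsOn_indicator_setOf (dependsOn_natCast_lt_T1 i) 1)

end Independence

section Law

variable {X : Type*} [Fintype X] [MeasurableSpace X] [DiscreteMeasurableSpace X]

lemma pmfMeasure_setOf_not_pos (r : X → ℝ) : pmfMeasure r {x | ¬ 0 < r x} = 0 := by
  simp only [pmfMeasure, Measure.coe_finsetSum, Finset.sum_apply, Measure.smul_apply, smul_eq_mul]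
  refine sum_eq_zero fun x _ => ?_
  by_cases hx : 0 < r x
  · simp [hx]
  · simp [ENNReal.ofReal_eq_zero.mpr (not_lt.mp hx)]

lemma integral_pmfMeasure {r : X → ℝ} (hr : ∀ x, 0 ≤ r x) (f : X → ℝ) :
    ∫ x, f x ∂(pmfMeasure r) = ∑ x, r x * f x := by
  have hfin : ∀ x : X, IsFiniteMeasure (ENNReal.ofReal (r x) • Measure.dirac x) := fun x =>
    ⟨by simp [lt_top_iff_ne_top]⟩
  rw [pmfMeasure, integral_finsetSum_measure fun x _ => Integrable.of_finite]
  refine sum_congr rfl fun x _ => ?_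
  rw [integral_smul_measure, integral_dirac, ENNReal.toReal_ofReal (hr x), smul_eq_mul]

variable {P : Measure (ℕ → X)} {r : ℕ → X → ℝ}

lemma integrable_comp_coord [IsFiniteMeasure P] (f : X → ℝ) (i : ℕ) :
    Integrable (fun ω => f (ω i)) P :=
  Integrable.of_finite.comp_measurable (measurable_pi_apply i)

lemma HasLaw.ae_forall_pos (hP : HasLaw P r) : ∀ᵐ ω ∂P, ∀ i, 0 < r i (ω i) :=
  ae_all_iff.mpr fun i => ae_of_ae_map (measurable_pi_apply i).aemeasurable
    (by rw [hP.2 i]; exact ae_iff.mpr (pmfMeasure_setOf_not_pos (r i)))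

lemma HasLaw.integral_comp (hP : HasLaw P r) (hr : ∀ i x, 0 ≤ r i x) (f : X → ℝ) (i : ℕ) :
    ∫ ω, f (ω i) ∂P = ∑ x, r i x * f x := by
  rw [← integral_map (measurable_pi_apply i).aemeasurable
    Measurable.of_discrete.aestronglyMeasurable, hP.2 i, integral_pmfMeasure (hr i)]

end Law

section Divergence

variable {X : Type*} [Fintype X] {p q : X → ℝ}

lemma KL_eq_sum (hq : ∀ x, 0 ≤ q x) : KL q p = ∑ x, q x * Real.log (q x / p x) :=
  sum_filter_of_ne fun x _ hne => (hq x).lt_of_ne' (left_ne_zero_of_mul hne)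

lemma exists_log_pos_of_KL_pos (hD : 0 < KL q p) : ∃ x, 0 < q x ∧ 0 < Real.log (q x / p x) := by
  by_contra! hneg
  refine hD.not_ge (sum_nonpos fun x hx => ?_)
  have hqx := (mem_filter.mp hx).2
  exact mul_nonpos_of_nonneg_of_nonpos hqx.le (hneg x hqx)

lemma log_le_sSup_log {x : X} (hx : 0 < q x) :
    Real.log (q x / p x) ≤ sSup {y : ℝ | ∃ x, 0 < q x ∧ y = Real.log (q x / p x)} :=
  le_csSup ((Set.finite_range fun x => Real.log (q x / p x)).subset
    (by rintro _ ⟨x, -, rfl⟩; exact ⟨x, rfl⟩)).bddAbove ⟨x, hx, rfl⟩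

end Divergence

theorem delay_two_sided_bound_general
    [Fintype X] [MeasurableSpace X] [DiscreteMeasurableSpace X]
    (p q : X → ℝ) (hq : IsPMF q)
    (hsupp : ∀ x, 0 < q x → 0 < p x)
    (D : ℝ) (hD : D = KL q p) (hDpos : 0 < D)
    (h : ℝ) (hh : 0 ≤ h)
    (C : ℝ) (hC : C = sSup {y : ℝ | ∃ x, 0 < q x ∧ y = Real.log (q x / p x)})
    (P : Measure (ℕ → X)) [IsProbabilityMeasure P] (hP : HasLaw P (fun _ => q)) :
    (∀ᵐ ω ∂P, T1 p q h ω ≠ ⊤) ∧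
    ENNReal.ofReal (h / D) ≤ ∫⁻ ω, (T1 p q h ω : ℝ≥0∞) ∂P ∧
    ∫⁻ ω, (T1 p q h ω : ℝ≥0∞) ∂P ≤ ENNReal.ofReal ((h + C) / D) := by
  have hCle : ∀ x, 0 < q x → Real.log (q x / p x) ≤ C := fun x hx => hC ▸ log_le_sSup_log hx
  have hC0 : 0 ≤ C := by
    obtain ⟨x, hx, hpos⟩ := exists_log_pos_of_KL_pos (hD ▸ hDpos)
    exact hpos.le.trans (hCle x hx)
  have hK : ∀ i (ω : ℕ → X), |Real.log (q (ω i) / p (ω i))| ≤ ∑ x, |Real.log (q x / p x)| :=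
    fun i ω => single_le_sum (f := fun x => |Real.log (q x / p x)|) (fun _ _ => abs_nonneg _)
      (mem_univ _)
  have hZ := integrable_comp_coord (P := P) fun x => Real.log (q x / p x)
  have hmean : ∀ i, ∫ ω, Real.log (q (ω i) / p (ω i)) ∂P = D := fun i => by
    rw [hD, KL_eq_sum hq.1]
    exact hP.integral_comp (fun _ => hq.1) (fun x => Real.log (q x / p x)) i
  have hind := indepFun_log_indicator_lt_T1 (p := p) (q := q) (h := h) hP.1
  have hupper := lintegral_le_of_sum_range_min_le hZ hmean measurableSet_natCast_lt_T1 hind hDpos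
    fun n => hP.ae_forall_pos.mono fun ω hω => sum_range_min_T1_le hsupp hω hh hCle hC0 n
  have hfin := ne_top_of_le_ne_top ENNReal.ofReal_ne_top hupper
  have hfinite := ae_ne_top_of_lintegral_ne_top measurableSet_natCast_lt_T1 hfin
  obtain ⟨hint, hwald⟩ :=
    integral_sum_range_toNat_eq hK hZ hmean measurableSet_natCast_lt_T1 hind hfin
  have hlower : h ≤ D * (∫⁻ ω, (T1 p q h ω : ℝ≥0∞) ∂P).toReal := by
    rw [← hwald]
    refine integral_mono_ae (integrable_const h) hint ?_ |>.trans_eq' (by simp)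
    filter_upwards [hfinite, hP.ae_forall_pos] with ω hT hω
    exact_mod_cast llrSum_eq_coe_sum hsupp hω _ ▸ le_llrSum_toNat_T1 hT
  refine ⟨hfinite, ENNReal.ofReal_le_of_le_toReal ?_, hupper⟩
  rwa [div_le_iff₀ hDpos, mul_comm]

/-- **Two-sided delay bound for the one-sided threshold test.** If
`supp q ⊆ supp p`, `D := D(q‖p) > 0`, and `h ≥ 0`, then under the i.i.d.-`q`
measure, `T₁ < ∞` a.s. and `h/D ≤ E[T₁] ≤ (h + C)/D`, where
`C = max_{x ∈ supp q} log (q x / p x)`. -/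
theorem delay_two_sided_bound
    [Fintype X] [Nonempty X] [MeasurableSpace X] [DiscreteMeasurableSpace X]
    (p q : X → ℝ) (hp : IsPMF p) (hq : IsPMF q)
    (hsupp : ∀ x, 0 < q x → 0 < p x)
    (D : ℝ) (hD : D = KL q p) (hDpos : 0 < D)
    (h : ℝ) (hh : 0 ≤ h)
    (C : ℝ) (hC : C = sSup {y : ℝ | ∃ x, 0 < q x ∧ y = Real.log (q x / p x)})
    (P : Measure (ℕ → X)) [IsProbabilityMeasure P] (hP : HasLaw P (fun _ => q)) :
    (∀ᵐ ω ∂P, T1 p q h ω ≠ ⊤) ∧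
    ENNReal.ofReal (h / D) ≤ ∫⁻ ω, (T1 p q h ω : ℝ≥0∞) ∂P ∧
    ∫⁻ ω, (T1 p q h ω : ℝ≥0∞) ∂P ≤ ENNReal.ofReal ((h + C) / D) :=
  delay_two_sided_bound_general p q hq hsupp D hD hDpos h hh C hC P hP

end QCPD
end
end

section
/- Lower bound on the mean false alarm time of CUSUM: Assume supp q ⊆ supp p and h ≥ 0. Then under P_∞ (all X_i i.i.d. with law p), the CUSUM stopping time with threshold h satisfies E_∞[T*] ≥ e^{h} (as an inequality in the extended reals). -/
/-! The Shiryaev–Roberts statistic `R_n = ∑_{j < n} ∏_{i=j+1}^{n} L_i`, where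
`L_i = q(X_i) / p(X_i)`, satisfies `R_{n+1} = (R_n + 1) L_{n+1}`. Since `L_{n+1}` is independent
of `X_1, …, X_n` with `E_∞[L_{n+1}] ≤ 1`, the process `R_n - n` is a supermartingale under `P_∞`,
so stopping it at `T*` gives `E_∞[R_{T* ∧ n}] ≤ E_∞[T* ∧ n] ≤ E_∞[T*]`. When the alarm sounds,
`R_{T*}` dominates the block likelihood ratio `∏_{i=j+1}^{T*} L_i ≥ e^h` that raised it, hence
`e^h P_∞(T* ≤ n) ≤ E_∞[T*]` for every `n`. Letting `n → ∞` concludes if `T* < ∞` almost surely,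
and otherwise `E_∞[T*] = ∞`. -/

open MeasureTheory ProbabilityTheory Real Filter
open scoped ENNReal NNReal

noncomputable section

namespace QCPD

variable {X : Type*}

/-- `T_j` (here `j : ℕ` represents the 1-indexed start `j+1`, so all starts
`j ≥ 1` are covered): the first time `n ≥ j+1` such that
`∑_{i=j+1}^n log (q (X_i) / p (X_i)) ≥ h`, and `∞` if there is no such `n`. -/
def Tj (p q : X → ℝ) (h : ℝ) (j : ℕ) (ω : ℕ → X) : ℕ∞ :=
  sInf ((↑) '' {n : ℕ | j + 1 ≤ n ∧ (h : EReal) ≤ ∑ i ∈ Finset.Ico j n, llr p q (ω i)})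

/-- The CUSUM stopping time `T* = inf_{j ≥ 1} T_j` with threshold `h`. -/
def Tstar (p q : X → ℝ) (h : ℝ) (ω : ℕ → X) : ℕ∞ := ⨅ j : ℕ, Tj p q h j ω

theorem _root_.ENNReal.log_prod_s7 {ι : Type*} (s : Finset ι) (f : ι → ℝ≥0∞) :
    ENNReal.log (∏ i ∈ s, f i) = ∑ i ∈ s, ENNReal.log (f i) := by
  classical
  induction s using Finset.induction_on with
  | empty => simp
  | insert i s hi ih =>
    rw [Finset.prod_insert hi, Finset.sum_insert hi, ENNReal.log_mul_add, ih]

theorem _root_.ENat.natCast_succ_le_iff_not_le {T : ℕ∞} {n : ℕ} :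
    ((n + 1 : ℕ) : ℕ∞) ≤ T ↔ ¬ T ≤ n := by
  rw [Nat.cast_add_one, ENat.add_one_le_iff (ENat.natCast_ne_top n), not_le]

theorem _root_.ENat.toENNReal_min_natCast_succ (T : ℕ∞) (n : ℕ) :
    ((min T (n + 1 : ℕ) : ℕ∞) : ℝ≥0∞) = (min T n : ℕ∞) + if T ≤ n then 0 else 1 := by
  induction T using ENat.recTopCoe with
  | top => simp
  | coe k =>
    simp only [Nat.cast_le]
    split_ifs with hk
    · rw [min_eq_left (by exact_mod_cast hk.trans n.le_succ), min_eq_left (by exact_mod_cast hk),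
        add_zero]
    · have hnk : n < k := not_le.mp hk
      rw [min_eq_right (by exact_mod_cast hnk), min_eq_right (by exact_mod_cast hnk.le)]
      simp

theorem _root_.ENat.iUnion_setOf_le_natCast {α : Type*} (f : α → ℕ∞) :
    ⋃ n : ℕ, {x | f x ≤ n} = {x | f x ≠ ⊤} := by
  ext x
  simp only [Set.mem_iUnion, Set.mem_ofPred_eq]
  exact ⟨fun ⟨n, hn⟩ => ne_top_of_le_ne_top (ENat.natCast_ne_top n) hn,
    fun hx => (ENat.ne_top_iff_exists.mp hx).imp fun _ => ge_of_eq⟩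

def likelihoodRatio (p q : X → ℝ) (x : X) : ℝ≥0∞ := ENNReal.ofReal (q x) / ENNReal.ofReal (p x)

/-- The likelihood ratio of the block `X_{j+1}, …, X_m`. -/
def blockLR (p q : X → ℝ) (j m : ℕ) (ω : ℕ → X) : ℝ≥0∞ :=
  ∏ i ∈ Finset.Ico j m, likelihoodRatio p q (ω i)

theorem coe_le_sum_llr_iff (p q : X → ℝ) (h : ℝ) (j m : ℕ) (ω : ℕ → X) :
    (h : EReal) ≤ ∑ i ∈ Finset.Ico j m, llr p q (ω i) ↔
      ENNReal.ofReal (Real.exp h) ≤ blockLR p q j m ω := by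
  rw [← ENNReal.log_le_log_iff, ENNReal.log_ofReal_of_pos (Real.exp_pos h), Real.log_exp,
    blockLR, ENNReal.log_prod_s7]
  rfl

theorem Tstar_le_coe_iff (p q : X → ℝ) (h : ℝ) (n : ℕ) (ω : ℕ → X) :
    Tstar p q h ω ≤ n ↔
      ∃ m ≤ n, ∃ j < m, ENNReal.ofReal (Real.exp h) ≤ blockLR p q j m ω := by
  rw [← ENat.lt_add_one_iff (ENat.natCast_ne_top n), Tstar, iInf_lt_iff]
  simp only [Tj, sInf_lt_iff, Set.mem_image, Set.mem_ofPred_eq, coe_le_sum_llr_iff]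
  constructor
  · rintro ⟨j, _, ⟨m, ⟨hjm, hm⟩, rfl⟩, hmn⟩
    exact ⟨m, by exact_mod_cast Order.lt_add_one_iff.mp (by exact_mod_cast hmn), j, hjm, hm⟩
  · rintro ⟨m, hmn, j, hjm, hm⟩
    exact ⟨j, m, ⟨m, ⟨hjm, hm⟩, rfl⟩, by exact_mod_cast Nat.lt_add_one_of_le hmn⟩

/-- The Shiryaev–Roberts statistic stopped at `T*`. -/
def stoppedSR (p q : X → ℝ) (h : ℝ) : ℕ → (ℕ → X) → ℝ≥0∞
  | 0, _ => 0
  | n + 1, ω =>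
      if Tstar p q h ω ≤ n then stoppedSR p q h n ω
      else (stoppedSR p q h n ω + 1) * likelihoodRatio p q (ω n)

theorem blockLR_le_stoppedSR (p q : X → ℝ) (h : ℝ) (ω : ℕ → X) :
    ∀ {n : ℕ}, (n : ℕ∞) ≤ Tstar p q h ω → ∀ j < n, blockLR p q j n ω ≤ stoppedSR p q h n ω
  | 0, _, _, hj => absurd hj (Nat.not_lt_zero _)
  | n + 1, hT, j, hj => by
    have hnT : ¬ Tstar p q h ω ≤ n := ENat.natCast_succ_le_iff_not_le.mp hT
    have hblock : blockLR p q j n ω ≤ stoppedSR p q h n ω + 1 := by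
      rcases (Nat.lt_succ_iff.mp hj).lt_or_eq with hjn | rfl
      · exact (blockLR_le_stoppedSR p q h ω (not_le.mp hnT).le j hjn).trans le_self_add
      · simp [blockLR]
    rw [stoppedSR, if_neg hnT, blockLR, Finset.prod_Ico_succ_top (Nat.lt_succ_iff.mp hj)]
    exact mul_le_mul_left hblock _

theorem exp_le_stoppedSR (p q : X → ℝ) (h : ℝ) (ω : ℕ → X) :
    ∀ {n : ℕ}, Tstar p q h ω ≤ n → ENNReal.ofReal (Real.exp h) ≤ stoppedSR p q h n ω
  | 0, hT => by
    obtain ⟨m, hm, j, hjm, -⟩ := (Tstar_le_coe_iff p q h 0 ω).mp hT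
    omega
  | n + 1, hT => by
    by_cases hnT : Tstar p q h ω ≤ n
    · rw [stoppedSR, if_pos hnT]
      exact exp_le_stoppedSR p q h ω hnT
    obtain ⟨m, hm, j, hjm, hexp⟩ := (Tstar_le_coe_iff p q h (n + 1) ω).mp hT
    obtain rfl : m = n + 1 := hm.antisymm <| not_le.mp fun hmn =>
      hnT ((Tstar_le_coe_iff p q h n ω).mpr ⟨m, hmn, j, hjm, hexp⟩)
    exact hexp.trans
      (blockLR_le_stoppedSR p q h ω (ENat.natCast_succ_le_iff_not_le.mpr hnT) j hjm)

section Measurability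

variable [MeasurableSpace X]

/-- The σ-algebra generated by `X_1, …, X_n`. -/
abbrev pastSigma (n : ℕ) : MeasurableSpace (ℕ → X) :=
  ⨆ i ∈ Set.Iio n, MeasurableSpace.comap (fun ω => ω i) ‹_›

theorem pastSigma_le (n : ℕ) :
    pastSigma n ≤ (MeasurableSpace.pi : MeasurableSpace (ℕ → X)) :=
  iSup₂_le fun i _ => (measurable_pi_apply i).comap_le

theorem pastSigma_mono : Monotone (pastSigma (X := X)) :=
  fun _ _ hmn => biSup_mono fun _ hi => lt_of_lt_of_le hi hmn

theorem indep_pastSigma_coord {P : Measure (ℕ → X)}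
    (hP : iIndepFun (fun i (ω : ℕ → X) => ω i) P) (n : ℕ) :
    Indep (pastSigma n) (MeasurableSpace.comap (fun ω : ℕ → X => ω n) ‹_›) P := by
  have := indep_iSup_of_disjoint (fun i => (measurable_pi_apply i).comap_le) hP.iIndep
    (S := Set.Iio n) (T := {n}) (by simp)
  rwa [iSup_singleton] at this

variable [DiscreteMeasurableSpace X]

theorem measurable_pastSigma_likelihoodRatio (p q : X → ℝ) {i n : ℕ} (hi : i < n) :
    Measurable[pastSigma n] fun ω : ℕ → X => likelihoodRatio p q (ω i) :=
  ((Measurable.of_discrete (f := likelihoodRatio p q)).comp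
      (comap_measurable fun ω : ℕ → X => ω i)).mono
    (le_iSup₂ (f := fun i (_ : i ∈ Set.Iio n) => MeasurableSpace.comap (fun ω : ℕ → X => ω i) _)
      i hi) le_rfl

theorem measurable_pastSigma_blockLR (p q : X → ℝ) {j m n : ℕ} (hmn : m ≤ n) :
    Measurable[pastSigma n] (blockLR p q j m) :=
  Finset.measurable_prod _ fun _ hi =>
    measurable_pastSigma_likelihoodRatio p q ((Finset.mem_Ico.mp hi).2.trans_le hmn)

theorem measurableSet_pastSigma_Tstar_le (p q : X → ℝ) (h : ℝ) (n : ℕ) :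
    MeasurableSet[pastSigma n] {ω | Tstar p q h ω ≤ n} := by
  have : {ω | Tstar p q h ω ≤ n} = ⋃ m, ⋃ (_ : m ≤ n), ⋃ j, ⋃ (_ : j < m),
      {ω | ENNReal.ofReal (Real.exp h) ≤ blockLR p q j m ω} := by
    ext ω; simp [Tstar_le_coe_iff]
  rw [this]
  exact .iUnion fun m => .iUnion fun hm => .iUnion fun j => .iUnion fun _ =>
    measurableSet_le measurable_const (measurable_pastSigma_blockLR p q hm)

theorem measurableSet_Tstar_le (p q : X → ℝ) (h : ℝ) (n : ℕ) :
    MeasurableSet {ω | Tstar p q h ω ≤ n} :=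
  pastSigma_le n _ (measurableSet_pastSigma_Tstar_le p q h n)

theorem measurable_Tstar (p q : X → ℝ) (h : ℝ) : Measurable (Tstar p q h) := by
  refine ENat.measurable_iff.mpr fun n => ?_
  cases n with
  | zero => simpa [Set.preimage, nonpos_iff_eq_zero] using measurableSet_Tstar_le p q h 0
  | succ k =>
    have : Tstar p q h ⁻¹' {((k + 1 : ℕ) : ℕ∞)} =
        {ω | Tstar p q h ω ≤ (k + 1 : ℕ)} \ {ω | Tstar p q h ω ≤ k} := by
      ext ω
      rw [Set.mem_preimage, Set.mem_singleton_iff, le_antisymm_iff,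
        ENat.natCast_succ_le_iff_not_le]
      rfl
    rw [this]
    exact (measurableSet_Tstar_le p q h _).diff (measurableSet_Tstar_le p q h k)

theorem measurable_pastSigma_stoppedSR (p q : X → ℝ) (h : ℝ) :
    ∀ n, Measurable[pastSigma n] (stoppedSR p q h n)
  | 0 => measurable_const
  | n + 1 => by
    have hS := (measurable_pastSigma_stoppedSR p q h n).mono (pastSigma_mono n.le_succ) le_rfl
    exact Measurable.ite (pastSigma_mono n.le_succ _ (measurableSet_pastSigma_Tstar_le p q h n))
      hS ((hS.add_const 1).mul (measurable_pastSigma_likelihoodRatio p q n.lt_succ_self))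

end Measurability

section Expectation

variable [Fintype X] [MeasurableSpace X] [DiscreteMeasurableSpace X]

theorem lintegral_pmfMeasure (p : X → ℝ) (f : X → ℝ≥0∞) :
    ∫⁻ x, f x ∂pmfMeasure p = ∑ x, ENNReal.ofReal (p x) * f x := by
  simp only [pmfMeasure, lintegral_finsetSum_measure, lintegral_smul_measure, lintegral_dirac,
    smul_eq_mul]

theorem lintegral_likelihoodRatio_le_one (p : X → ℝ) {q : X → ℝ} (hq : IsPMF q) :
    ∫⁻ x, likelihoodRatio p q x ∂pmfMeasure p ≤ 1 :=
  calc ∫⁻ x, likelihoodRatio p q x ∂pmfMeasure p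
      ≤ ∑ x, ENNReal.ofReal (q x) := by
        rw [lintegral_pmfMeasure]
        exact Finset.sum_le_sum fun x _ => ENNReal.mul_div_le
    _ = 1 := by rw [← ENNReal.ofReal_sum_of_nonneg fun x _ => hq.1 x, hq.2, ENNReal.ofReal_one]

theorem lintegral_mul_likelihoodRatio_le {p q : X → ℝ} (hq : IsPMF q) {P : Measure (ℕ → X)}
    (hP : HasLaw P fun _ => p) {n : ℕ} {g : (ℕ → X) → ℝ≥0∞} (hg : Measurable[pastSigma n] g) :
    ∫⁻ ω, g ω * likelihoodRatio p q (ω n) ∂P ≤ ∫⁻ ω, g ω ∂P := by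
  have hLR : ∫⁻ ω, likelihoodRatio p q (ω n) ∂P ≤ 1 := by
    rw [← lintegral_map Measurable.of_discrete (measurable_pi_apply n), hP.2 n]
    exact lintegral_likelihoodRatio_le_one p hq
  have hLR_meas : Measurable[MeasurableSpace.comap (fun ω : ℕ → X => ω n) ‹_›]
      fun ω => likelihoodRatio p q (ω n) :=
    (Measurable.of_discrete (f := likelihoodRatio p q)).comp
      (comap_measurable fun ω : ℕ → X => ω n)
  rw [lintegral_mul_eq_lintegral_mul_lintegral_of_independent_measurableSpace (pastSigma_le n)
    (measurable_pi_apply n).comap_le (indep_pastSigma_coord hP.1 n) hg hLR_meas]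
  exact mul_le_of_le_one_right' hLR

theorem lintegral_stoppedSR_le {p q : X → ℝ} (hq : IsPMF q) (h : ℝ)
    {P : Measure (ℕ → X)} (hP : HasLaw P fun _ => p) :
    ∀ n : ℕ, ∫⁻ ω, stoppedSR p q h n ω ∂P ≤ ∫⁻ ω, ((min (Tstar p q h ω) n : ℕ∞) : ℝ≥0∞) ∂P
  | 0 => by simp [stoppedSR]
  | n + 1 => by
    set A := {ω | Tstar p q h ω ≤ n}
    have hA : MeasurableSet[pastSigma n] A := measurableSet_pastSigma_Tstar_le p q h n
    have hS_past := measurable_pastSigma_stoppedSR p q h n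
    have hS := hS_past.mono (pastSigma_le n) le_rfl
    have hcont : Measurable[pastSigma n] (Aᶜ.indicator fun ω => stoppedSR p q h n ω + 1) :=
      (hS_past.add_const 1).indicator hA.compl
    calc ∫⁻ ω, stoppedSR p q h (n + 1) ω ∂P
        = ∫⁻ ω, A.indicator (stoppedSR p q h n) ω ∂P + ∫⁻ ω, Aᶜ.indicator
            (fun ω => stoppedSR p q h n ω + 1) ω * likelihoodRatio p q (ω n) ∂P := by
          rw [← lintegral_add_left (hS.indicator (pastSigma_le n _ hA))]
          refine lintegral_congr fun ω => ?_
          by_cases hω : Tstar p q h ω ≤ n <;> simp [stoppedSR, A, hω]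
      _ ≤ ∫⁻ ω, A.indicator (stoppedSR p q h n) ω ∂P + ∫⁻ ω, Aᶜ.indicator
            (fun ω => stoppedSR p q h n ω + 1) ω ∂P :=
          add_le_add le_rfl (lintegral_mul_likelihoodRatio_le hq hP hcont)
      _ = ∫⁻ ω, stoppedSR p q h n ω ∂P + ∫⁻ ω, Aᶜ.indicator 1 ω ∂P := by
          rw [← lintegral_add_left (hS.indicator (pastSigma_le n _ hA)),
            ← lintegral_add_left hS]
          refine lintegral_congr fun ω => ?_
          by_cases hω : ω ∈ A <;> simp [hω, add_comm]
      _ ≤ ∫⁻ ω, ((min (Tstar p q h ω) n : ℕ∞) : ℝ≥0∞) ∂P + ∫⁻ ω, Aᶜ.indicator 1 ω ∂P :=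
          add_le_add (lintegral_stoppedSR_le hq h hP n) le_rfl
      _ = ∫⁻ ω, ((min (Tstar p q h ω) (n + 1 : ℕ) : ℕ∞) : ℝ≥0∞) ∂P := by
          rw [← lintegral_add_right _ (measurable_one.indicator (pastSigma_le n _ hA.compl))]
          refine lintegral_congr fun ω => ?_
          rw [ENat.toENNReal_min_natCast_succ]
          by_cases hω : Tstar p q h ω ≤ n <;> simp [A, hω]

theorem exp_mul_measure_Tstar_le_le_lintegral {p q : X → ℝ} (hq : IsPMF q) (h : ℝ)
    {P : Measure (ℕ → X)} (hP : HasLaw P fun _ => p) (n : ℕ) :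
    ENNReal.ofReal (Real.exp h) * P {ω | Tstar p q h ω ≤ n} ≤
      ∫⁻ ω, (Tstar p q h ω : ℝ≥0∞) ∂P :=
  calc ENNReal.ofReal (Real.exp h) * P {ω | Tstar p q h ω ≤ n}
      = ∫⁻ ω, {ω | Tstar p q h ω ≤ n}.indicator (fun _ => ENNReal.ofReal (Real.exp h)) ω ∂P :=
        (lintegral_indicator_const (measurableSet_Tstar_le p q h n) _).symm
    _ ≤ ∫⁻ ω, stoppedSR p q h n ω ∂P :=
        lintegral_mono <| Set.indicator_le fun ω hω => exp_le_stoppedSR p q h ω hω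
    _ ≤ ∫⁻ ω, ((min (Tstar p q h ω) n : ℕ∞) : ℝ≥0∞) ∂P := lintegral_stoppedSR_le hq h hP n
    _ ≤ ∫⁻ ω, (Tstar p q h ω : ℝ≥0∞) ∂P :=
        lintegral_mono fun _ => ENat.toENNReal_le.mpr (min_le_left _ _)

theorem exp_mul_measure_Tstar_ne_top_le_lintegral {p q : X → ℝ} (hq : IsPMF q) (h : ℝ)
    {P : Measure (ℕ → X)} (hP : HasLaw P fun _ => p) :
    ENNReal.ofReal (Real.exp h) * P {ω | Tstar p q h ω ≠ ⊤} ≤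
      ∫⁻ ω, (Tstar p q h ω : ℝ≥0∞) ∂P := by
  have hmono : Monotone fun n : ℕ => {ω | Tstar p q h ω ≤ n} :=
    fun _ _ hmn _ hω => le_trans (α := ℕ∞) hω (Nat.cast_le.mpr hmn)
  rw [← ENat.iUnion_setOf_le_natCast, hmono.measure_iUnion, ENNReal.mul_iSup]
  exact iSup_le (exp_mul_measure_Tstar_le_le_lintegral hq h hP)

end Expectation

theorem cusum_false_alarm_lower_bound_general
    [Fintype X] [MeasurableSpace X] [DiscreteMeasurableSpace X]
    (p q : X → ℝ) (hq : IsPMF q)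
    (h : ℝ)
    (Pinf : Measure (ℕ → X)) [IsProbabilityMeasure Pinf]
    (hPinf : HasLaw Pinf (fun _ => p)) :
    ENNReal.ofReal (Real.exp h) ≤ ∫⁻ ω, (Tstar p q h ω : ℝ≥0∞) ∂Pinf := by
  have hT : Measurable (Tstar p q h) := measurable_Tstar p q h
  by_cases htop : Pinf {ω | Tstar p q h ω = ⊤} = 0
  · have hfin : Pinf {ω | Tstar p q h ω ≠ ⊤} = 1 :=
      (prob_compl_eq_zero_iff (s := {ω | Tstar p q h ω ≠ ⊤})
        (hT (measurableSet_singleton ⊤)).compl).mp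
        (by simpa only [Set.compl_ofPred, not_not] using htop)
    simpa [hfin] using exp_mul_measure_Tstar_ne_top_le_lintegral hq h hPinf
  · have hinf : ∫⁻ ω, (Tstar p q h ω : ℝ≥0∞) ∂Pinf = ⊤ :=
      lintegral_eq_top_of_measure_eq_top_ne_zero (Measurable.of_discrete.comp hT).aemeasurable
        (by simpa using htop)
    exact hinf ▸ le_top

/-- **Lower bound on the mean false alarm time of CUSUM.** If `supp q ⊆ supp p`
and `h ≥ 0`, then under the i.i.d.-`p` measure `P_∞`, the CUSUM stopping time
with threshold `h` satisfies `E_∞[T*] ≥ e^h` in the extended reals. -/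
theorem cusum_false_alarm_lower_bound
    [Fintype X] [Nonempty X] [MeasurableSpace X] [DiscreteMeasurableSpace X]
    (p q : X → ℝ) (hp : IsPMF p) (hq : IsPMF q)
    (hsupp : ∀ x, 0 < q x → 0 < p x)
    (h : ℝ) (hh : 0 ≤ h)
    (Pinf : Measure (ℕ → X)) [IsProbabilityMeasure Pinf]
    (hPinf : HasLaw Pinf (fun _ => p)) :
    ENNReal.ofReal (Real.exp h) ≤ ∫⁻ ω, (Tstar p q h ω : ℝ≥0∞) ∂Pinf :=
  cusum_false_alarm_lower_bound_general p q hq h Pinf hPinf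

end QCPD
end
end

section
/- Existence of a hard change point: Let T be a random variable on a probability space taking values in {0,1,2,…} with 0 < E[T] < ∞, and let m ≥ 1 be an integer. Then there exists ν ∈ {0,1,2,…} with P(T > ν) > 0 and P(T > ν + m | T > ν) ≥ 1 − m/E[T]. -/
open MeasureTheory ProbabilityTheory Real
open scoped ENNReal

noncomputable section

/-! The tail probabilities `p n = P(T > n)` sum to `E[T]`. If every `ν` with `p ν > 0` had
`p (ν + m) < c p ν` with `c = 1 - m / E[T]`, then summing over `ν` would give
`E[T] - m ≤ ∑ₙ p (n + m) < c E[T] = E[T] - m`, since the first `m` tail probabilities are at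
most `1` each. -/

theorem natCast_eq_tsum_indicator_lt (t : ℕ) :
    (t : ℝ≥0∞) = ∑' n : ℕ, (Set.Iio t).indicator 1 n := by
  rw [← tsum_subtype]
  simp

theorem lintegral_natCast_eq_tsum_measure_lt {Ω : Type*} [MeasurableSpace Ω] (μ : Measure Ω)
    {T : Ω → ℕ} (hT : Measurable T) :
    ∫⁻ ω, (T ω : ℝ≥0∞) ∂μ = ∑' n : ℕ, μ {ω | n < T ω} := by
  have hmeas (n : ℕ) : MeasurableSet {ω | n < T ω} := hT measurableSet_Ioi
  calc ∫⁻ ω, (T ω : ℝ≥0∞) ∂μ = ∫⁻ ω, ∑' n : ℕ, {ω | n < T ω}.indicator 1 ω ∂μ := by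
        congr with ω
        rw [natCast_eq_tsum_indicator_lt]
        rfl
    _ = ∑' n : ℕ, μ {ω | n < T ω} := by
        rw [lintegral_tsum fun n => (measurable_one.indicator (hmeas n)).aemeasurable]
        simp only [lintegral_indicator_one (hmeas _)]

theorem hasSum_measureReal_lt_integral {Ω : Type*} [MeasurableSpace Ω] (μ : Measure Ω)
    {T : Ω → ℕ} (hT : Measurable T) (hint : Integrable (fun ω => (T ω : ℝ)) μ) :
    HasSum (fun n : ℕ => μ.real {ω | n < T ω}) (∫ ω, (T ω : ℝ) ∂μ) := by
  have hlintegral : ∫⁻ ω, (T ω : ℝ≥0∞) ∂μ = ENNReal.ofReal (∫ ω, (T ω : ℝ) ∂μ) := by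
    rw [ofReal_integral_eq_lintegral_ofReal hint (Filter.Eventually.of_forall fun ω => by
      positivity)]
    simp only [ENNReal.ofReal_natCast]
  have hfin : ∑' n : ℕ, μ {ω | n < T ω} ≠ ∞ := by
    rw [← lintegral_natCast_eq_tsum_measure_lt μ hT, hlintegral]
    exact ENNReal.ofReal_ne_top
  have h := ENNReal.hasSum_toReal hfin
  rwa [← ENNReal.tsum_toReal_eq (ENNReal.ne_top_of_tsum_ne_top hfin),
    ← lintegral_natCast_eq_tsum_measure_lt μ hT, hlintegral,
    ENNReal.toReal_ofReal (integral_nonneg fun ω => by positivity)] at h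

theorem exists_pos_and_one_sub_div_le_div_of_hasSum {p : ℕ → ℝ} {E : ℝ}
    (hp_nonneg : ∀ n, 0 ≤ p n) (hp_le_one : ∀ n, p n ≤ 1) (hp_anti : Antitone p)
    (hsum : HasSum p E) (hE : 0 < E) (m : ℕ) :
    ∃ ν, 0 < p ν ∧ 1 - m / E ≤ p (ν + m) / p ν := by
  by_contra! hlt
  set c := 1 - m / E
  have hp0 : 0 < p 0 := by
    by_contra! h0
    exact hE.not_ge (hasSum_le (fun n => (hp_anti n.zero_le).trans h0) hsum hasSum_zero)
  have hstep (ν : ℕ) : p (ν + m) ≤ c * p ν := by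
    rcases (hp_nonneg ν).eq_or_lt with hzero | hpos
    · rw [← hzero, mul_zero, hzero]
      exact hp_anti (Nat.le_add_right ν m)
    · exact ((div_lt_iff₀ hpos).1 (hlt ν hpos)).le
  have htail : ∑' n, p (n + m) < c * E := by
    rw [← hsum.tsum_eq, ← tsum_mul_left]
    exact Summable.tsum_lt_tsum (i := 0) hstep ((div_lt_iff₀ hp0).1 (hlt 0 hp0))
      ((summable_nat_add_iff m).2 hsum.summable) (hsum.summable.mul_left c)
  have hhead : ∑ k ∈ Finset.range m, p k ≤ m := by
    simpa using Finset.sum_le_sum fun k (_ : k ∈ Finset.range m) => hp_le_one k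
  have hsplit := hsum.summable.sum_add_tsum_nat_add m
  have hcE : c * E = E - m := by
    simp only [c]
    field_simp
  linarith [hsum.tsum_eq]

theorem exists_hard_change_point_general
    {Ω : Type*} [MeasurableSpace Ω] (P : Measure Ω) [IsProbabilityMeasure P]
    (T : Ω → ℕ) (hmeas : Measurable T)
    (hint : Integrable (fun ω => (T ω : ℝ)) P)
    (hpos : 0 < ∫ ω, (T ω : ℝ) ∂P)
    (m : ℕ) :
    ∃ ν : ℕ, 0 < P {ω | ν < T ω} ∧
      ENNReal.ofReal (1 - m / ∫ ω, (T ω : ℝ) ∂P) ≤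
        P {ω | ν + m < T ω} / P {ω | ν < T ω} := by
  have hanti : Antitone fun n : ℕ => P.real {ω | n < T ω} :=
    fun a b hab => measureReal_mono fun ω (h : b < T ω) => hab.trans_lt h
  obtain ⟨ν, hν, hratio⟩ := exists_pos_and_one_sub_div_le_div_of_hasSum
    (fun n => measureReal_nonneg) (fun n => measureReal_le_one) hanti
    (hasSum_measureReal_lt_integral P hmeas hint) hpos m
  refine ⟨ν, (ENNReal.toReal_pos_iff.1 hν).1, ?_⟩
  rw [← ofReal_measureReal, ← ofReal_measureReal, ← ENNReal.ofReal_div_of_pos hν]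
  exact ENNReal.ofReal_le_ofReal hratio

/-- **Existence of a hard change point.** If `T` takes values in `{0,1,2,…}` with
`0 < E[T] < ∞` and `m ≥ 1`, then there is a `ν` with `P(T > ν) > 0` and
`P(T > ν + m | T > ν) ≥ 1 − m / E[T]`.  (Since `{T > ν + m} ⊆ {T > ν}`, the
conditional probability equals `P(T > ν + m) / P(T > ν)`.) -/
theorem exists_hard_change_point
    {Ω : Type*} [MeasurableSpace Ω] (P : Measure Ω) [IsProbabilityMeasure P]
    (T : Ω → ℕ) (hmeas : Measurable T)
    (hint : Integrable (fun ω => (T ω : ℝ)) P)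
    (hpos : 0 < ∫ ω, (T ω : ℝ) ∂P)
    (m : ℕ) (hm : 1 ≤ m) :
    ∃ ν : ℕ, 0 < P {ω | ν < T ω} ∧
      ENNReal.ofReal (1 - m / ∫ ω, (T ω : ℝ) ∂P) ≤
        P {ω | ν + m < T ω} / P {ω | ν < T ω} :=
  exists_hard_change_point_general P T hmeas hint hpos m
end
end

section
/- Asymptotic lower bound on the worst-case detection delay (classical form of Lai's theorem): Let I > 0 and ε ∈ (0,1), and suppose that lim_{n→∞} sup_{ν ≥ 0} sup_{x^ν : P_∞(X^ν = x^ν) > 0} P_ν( max_{1 ≤ t ≤ n} λ^{(ν)}_{ν+t} ≥ (1+ε)·I·n | X^ν = x^ν ) = 0. Then for every δ ∈ (0,1) there exists K₀ such that every stopping time T with respect to the canonical filtration, taking values in {1,2,…}, with K₀ ≤ E_∞[T] < ∞, satisfies sup_{ν ≥ 0 : P_∞(T > ν) > 0} E_ν[T − ν | T > ν] ≥ (1 − ε)(1 − δ) · (log E_∞[T]) / I, where the conditional expectations are taken in the extended reals. -/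
/-!
Fix `δ`, put `c = (1 + ε) I` and take the window length `n ≈ (1 - ε)(1 - δ/2) log E_∞[T] / I`,
so that `n e^{cn} = o(E_∞[T])` because `c (1 - ε)(1 - δ/2) / I < 1`. If every window
`(kn, (k+1)n]` had `P_∞`-hazard at least `(δ/4) e^{-cn}`, the tail of `T` would decay geometrically
and force `E_∞[T] ≤ 4 n e^{cn} / δ`; hence some window, starting at `ν = kn`, has small hazard.
Under `P_ν`, stopping in that window on `{T > ν}` happens either where the likelihood ratio is
still below `e^{cn}`, which costs at most a factor `e^{cn}` over `P_∞`, or where it has already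
crossed `e^{cn}`, which the hypothesis makes unlikely. So `P_ν(T > ν + n | T > ν) ≥ 1 - δ/2`, and
`E_ν[T - ν | T > ν] ≥ n (1 - δ/2) ≥ (1 - ε)(1 - δ) log E_∞[T] / I`.
-/

open MeasureTheory ProbabilityTheory Real Filter
open scoped ENNReal NNReal

noncomputable section

namespace QCPD

variable {X : Type*}

/-- The canonical filtration `F_n = σ(X_1, …, X_n)` on `Ω = ℕ → X` (the `i`-th
coordinate represents `X_{i+1}`). -/
def filt (X : Type*) [MeasurableSpace X] (n : ℕ) : MeasurableSpace (ℕ → X) :=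
  MeasurableSpace.comap (fun ω (i : Fin n) => ω i) inferInstance

/-- The cylinder event `{X^n = x^n}` determined by the first `n` outcomes. -/
def cylEvent {X : Type*} {n : ℕ} (xs : Fin n → X) : Set (ℕ → X) :=
  {ω | ∀ i : Fin n, ω i = xs i}

/-- The cylinder event `{X^n = X^n(ω)}` of sequences agreeing with `ω` on the
first `n` outcomes. -/
def cylOf {X : Type*} (n : ℕ) (ω : ℕ → X) : Set (ℕ → X) := {ω' | ∀ i < n, ω' i = ω i}

/-- The log-likelihood ratio
`λ^{(ν)}_n(ω) = log (P_ν(X^n = X^n(ω)) / P_∞(X^n = X^n(ω)))`, valued in the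
extended reals. -/
def lam [MeasurableSpace X] (Pinf : Measure (ℕ → X)) (Pc : ℕ → Measure (ℕ → X)) (ν n : ℕ)
    (ω : ℕ → X) : EReal :=
  ENNReal.log (Pc ν (cylOf n ω) / Pinf (cylOf n ω))

section Cylinders

variable {m : ℕ} {A B : Set (ℕ → X)}

lemma cylEvent_eq_preimage (xs : Fin m → X) :
    cylEvent xs = (fun ω (i : Fin m) => ω i) ⁻¹' {xs} := by
  ext ω
  simp [cylEvent, funext_iff]

lemma cylOf_congr {ω ω' : ℕ → X} (h : ∀ i < m, ω i = ω' i) : cylOf m ω = cylOf m ω' := by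
  ext ω''
  exact forall₂_congr fun i hi => by rw [h i hi]

lemma cylOf_eq_cylEvent {xs : Fin m → X} {ω : ℕ → X} (hω : ω ∈ cylEvent xs) :
    cylOf m ω = cylEvent xs := by
  ext ω'
  exact ⟨fun h i => (h i i.isLt).trans (hω i), fun h i hi => (h ⟨i, hi⟩).trans (hω ⟨i, hi⟩).symm⟩

variable [MeasurableSpace X]

lemma filt_mono : Monotone (filt X) := by
  intro m m' hm
  have hres : Measurable fun (x : Fin m' → X) (i : Fin m) => x (Fin.castLE hm i) :=
    measurable_pi_lambda _ fun i => measurable_pi_apply _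
  calc filt X m = MeasurableSpace.comap (fun ω (i : Fin m') => ω i)
        (MeasurableSpace.comap (fun (x : Fin m' → X) (i : Fin m) => x (Fin.castLE hm i))
          inferInstance) := by rw [MeasurableSpace.comap_comp]; rfl
    _ ≤ filt X m' := MeasurableSpace.comap_mono hres.comap_le

lemma filt_le (m : ℕ) : filt X m ≤ MeasurableSpace.pi :=
  (show Measurable (fun ω (i : Fin m) => ω i : (ℕ → X) → Fin m → X) from
    measurable_pi_lambda _ fun _ => measurable_pi_apply _).comap_le

lemma mem_of_agree (hA : MeasurableSet[filt X m] A) {ω ω' : ℕ → X}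
    (hω : ω ∈ A) (h : ∀ i < m, ω i = ω' i) : ω' ∈ A := by
  obtain ⟨S, -, rfl⟩ := hA
  have : (fun i : Fin m => ω' i) = fun i : Fin m => ω i := funext fun i => (h i i.isLt).symm
  simpa [Set.mem_preimage, this] using hω

lemma measurableSet_filt_of_agree [Countable X] [MeasurableSingletonClass X]
    (h : ∀ ω ω' : ℕ → X, (∀ i < m, ω i = ω' i) → ω ∈ A → ω' ∈ A) :
    MeasurableSet[filt X m] A := by
  refine ⟨(fun ω (i : Fin m) => ω i) '' A, .of_discrete, ?_⟩
  refine Set.Subset.antisymm ?_ (Set.subset_preimage_image _ _)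
  rintro ω ⟨ω₀, hω₀, heq⟩
  exact h ω₀ ω (fun i hi => congrFun heq ⟨i, hi⟩) hω₀

lemma measurableSet_filt_cylEvent [MeasurableSingletonClass X] (xs : Fin m → X) :
    MeasurableSet[filt X m] (cylEvent xs) :=
  cylEvent_eq_preimage xs ▸ ⟨{xs}, measurableSet_singleton xs, rfl⟩

lemma cylEvent_subset_or_disjoint (hA : MeasurableSet[filt X m] A) (xs : Fin m → X) :
    cylEvent xs ⊆ A ∨ Disjoint (cylEvent xs) A := by
  refine or_iff_not_imp_right.mpr fun hnd => ?_
  obtain ⟨ω₀, hω₀, hω₀A⟩ := Set.not_disjoint_iff.mp hnd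
  exact fun ω hω => mem_of_agree hA hω₀A fun i hi => (hω₀ ⟨i, hi⟩).trans (hω ⟨i, hi⟩).symm

variable [Fintype X] [MeasurableSingletonClass X]

lemma sum_measure_inter_cylEvent (μ : Measure (ℕ → X)) (B : Set (ℕ → X)) (m : ℕ) :
    ∑ xs : Fin m → X, μ (B ∩ cylEvent xs) = μ B := by
  have hcyl (xs : Fin m → X) : MeasurableSet (cylEvent xs) :=
    filt_le m _ (measurableSet_filt_cylEvent xs)
  have := sum_measure_preimage_singleton (μ := μ.restrict B) Finset.univ
    (f := fun ω (i : Fin m) => ω i) fun xs _ => cylEvent_eq_preimage xs ▸ hcyl xs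
  simpa [← cylEvent_eq_preimage, Measure.restrict_apply (hcyl _), Set.inter_comm] using this

lemma measure_inter_le_of_forall_cylEvent_subset {μ μ' : Measure (ℕ → X)} {B' : Set (ℕ → X)}
    (hA : MeasurableSet[filt X m] A)
    (h : ∀ xs : Fin m → X, cylEvent xs ⊆ A → μ (B ∩ cylEvent xs) ≤ μ' (B' ∩ cylEvent xs)) :
    μ (B ∩ A) ≤ μ' (B' ∩ A) := by
  rw [← sum_measure_inter_cylEvent μ _ m, ← sum_measure_inter_cylEvent μ' _ m]
  refine Finset.sum_le_sum fun xs _ => ?_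
  rcases cylEvent_subset_or_disjoint hA xs with hsub | hdisj
  · simpa only [Set.inter_assoc, Set.inter_eq_right.mpr hsub] using h xs hsub
  · simp [Set.inter_assoc, hdisj.symm.inter_eq]

end Cylinders

lemma _root_.ENNReal.le_ofReal_exp_mul_of_log_div_lt {x y : ℝ≥0∞} {c : ℝ} (hy : y ≠ ∞)
    (h : ENNReal.log (x / y) < c) : x ≤ ENNReal.ofReal (exp c) * y := by
  rw [← EReal.log_exp c, ENNReal.log_lt_log_iff, EReal.exp_coe] at h
  exact (ENNReal.div_le_iff_le_mul (Or.inr ENNReal.ofReal_ne_top) (Or.inl hy)).mp h.le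

section Likelihood

variable [MeasurableSpace X] [Fintype X] [MeasurableSingletonClass X] {m : ℕ} {A : Set (ℕ → X)}

lemma measure_eq_of_forall_cylEvent {μ μ' : Measure (ℕ → X)}
    (h : ∀ xs : Fin m → X, μ (cylEvent xs) = μ' (cylEvent xs))
    (hA : MeasurableSet[filt X m] A) : μ A = μ' A := by
  have key {μ μ' : Measure (ℕ → X)} (h : ∀ xs : Fin m → X, μ (cylEvent xs) ≤ μ' (cylEvent xs)) :
      μ A ≤ μ' A := by
    simpa using measure_inter_le_of_forall_cylEvent_subset (B := Set.univ) (B' := Set.univ) hA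
      fun xs _ => by simpa using h xs
  exact le_antisymm (key fun xs => (h xs).le) (key fun xs => (h xs).ge)

lemma measurableSet_filt_le_lam (Pinf : Measure (ℕ → X)) (Pc : ℕ → Measure (ℕ → X))
    (ν : ℕ) (b : EReal) : MeasurableSet[filt X m] {ω | b ≤ lam Pinf Pc ν m ω} :=
  measurableSet_filt_of_agree fun ω ω' h (hω : b ≤ lam Pinf Pc ν m ω) =>
    show b ≤ lam Pinf Pc ν m ω' by rwa [lam, ← cylOf_congr h]

lemma measure_le_exp_mul_of_lam_lt (Pinf : Measure (ℕ → X)) [IsFiniteMeasure Pinf]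
    (Pc : ℕ → Measure (ℕ → X)) {ν : ℕ} {c : ℝ} (hA : MeasurableSet[filt X m] A)
    (h : ∀ ω ∈ A, lam Pinf Pc ν m ω < c) : Pc ν A ≤ ENNReal.ofReal (exp c) * Pinf A := by
  have := measure_inter_le_of_forall_cylEvent_subset (B := Set.univ) (B' := Set.univ)
    (μ := Pc ν) (μ' := ENNReal.ofReal (exp c) • Pinf) hA fun xs hsub => by
      rcases (cylEvent xs).eq_empty_or_nonempty with hempty | ⟨ω, hω⟩
      · simp [hempty]
      · simpa [← cylOf_eq_cylEvent hω] using
          ENNReal.le_ofReal_exp_mul_of_log_div_lt (measure_ne_top _ _) (h ω (hsub hω))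
  simpa using this

lemma measure_inter_le_mul_of_cond_le {μ : Measure (ℕ → X)} {B : Set (ℕ → X)} {a : ℝ≥0∞}
    (hfin : ∀ xs : Fin m → X, μ (cylEvent xs) ≠ ∞) (hA : MeasurableSet[filt X m] A)
    (h : ∀ xs : Fin m → X, 0 < μ (cylEvent xs) → μ (B ∩ cylEvent xs) / μ (cylEvent xs) ≤ a) :
    μ (B ∩ A) ≤ a * μ A := by
  have := measure_inter_le_of_forall_cylEvent_subset (B' := Set.univ) (μ := μ) (μ' := a • μ) hA
    fun xs _ => by
      rcases eq_zero_or_pos (μ (cylEvent xs)) with h0 | hpos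
      · simp [measure_mono_null Set.inter_subset_right h0]
      · simpa [mul_comm] using
          (ENNReal.div_le_iff_le_mul (Or.inl hpos.ne') (Or.inl (hfin xs))).mp (h xs hpos)
  simpa using this

end Likelihood

section TailSums

variable {α : Type*} [MeasurableSpace α] {μ : Measure α} {f : α → ℕ}

lemma lintegral_natCast_eq_tsum_measure_lt (hf : Measurable f) :
    ∫⁻ ω, (f ω : ℝ≥0∞) ∂μ = ∑' j : ℕ, μ {ω | j < f ω} := by
  have hset (j : ℕ) : MeasurableSet {ω | j < f ω} := measurableSet_lt measurable_const hf
  have hpt (ω : α) : (f ω : ℝ≥0∞) = ∑' j : ℕ, {ω | j < f ω}.indicator 1 ω := by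
    rw [tsum_eq_sum (s := Finset.range (f ω)) fun j hj => by simpa using hj]
    simp [Set.indicator_apply, Finset.filter_true_of_mem fun j hj => Finset.mem_range.mp hj]
  simp_rw [hpt]
  rw [lintegral_tsum fun j => (measurable_one.indicator (hset j)).aemeasurable]
  exact tsum_congr fun j => lintegral_indicator_one (hset j)

lemma lintegral_natCast_le_mul_tsum_measure_lt_mul (hf : Measurable f) (n : ℕ) [NeZero n] :
    ∫⁻ ω, (f ω : ℝ≥0∞) ∂μ ≤ n * ∑' k : ℕ, μ {ω | k * n < f ω} := by
  rw [lintegral_natCast_eq_tsum_measure_lt hf, ← (Nat.divModEquiv n).symm.tsum_eq,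
    ENNReal.tsum_prod', ← ENNReal.tsum_mul_left]
  refine ENNReal.tsum_le_tsum fun k => ?_
  calc ∑' i : Fin n, μ {ω | (Nat.divModEquiv n).symm (k, i) < f ω}
      ≤ ∑' _ : Fin n, μ {ω | k * n < f ω} :=
        ENNReal.tsum_le_tsum fun i => measure_mono fun ω hω => by
          simp only [Nat.divModEquiv_symm_apply, Set.mem_ofPred_eq] at hω ⊢; omega
    _ = n * μ {ω | k * n < f ω} := by simp

lemma measure_lt_mul_le_pow [IsProbabilityMeasure μ] (hf : Measurable f) {n : ℕ} {p : ℝ≥0∞}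
    (h : ∀ k : ℕ, p * μ {ω | k * n < f ω} ≤ μ {ω | k * n < f ω ∧ f ω ≤ k * n + n}) (k : ℕ) :
    μ {ω | k * n < f ω} ≤ (1 - p) ^ k := by
  induction k with
  | zero => simpa using prob_le_one (μ := μ) (s := {ω | 0 < f ω})
  | succ k ih =>
    have hsplit : {ω | (k + 1) * n < f ω} =
        {ω | k * n < f ω} \ {ω | k * n < f ω ∧ f ω ≤ k * n + n} := by
      ext ω; simp only [Set.mem_sdiff, Set.mem_ofPred_eq]; grind
    calc μ {ω | (k + 1) * n < f ω}
        = μ {ω | k * n < f ω} - μ {ω | k * n < f ω ∧ f ω ≤ k * n + n} := by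
          have hwin : MeasurableSet {ω | k * n < f ω ∧ f ω ≤ k * n + n} :=
            (measurableSet_lt measurable_const hf).inter (measurableSet_le hf measurable_const)
          rw [hsplit, measure_sdiff (s₁ := {ω | k * n < f ω}) (fun _ hω => hω.1)
            hwin.nullMeasurableSet (measure_ne_top _ _)]
      _ ≤ 1 * μ {ω | k * n < f ω} - p * μ {ω | k * n < f ω} := by
          rw [one_mul]; exact tsub_le_tsub_left (h k) _
      _ = (1 - p) * μ {ω | k * n < f ω} := by
          rw [ENNReal.sub_mul fun _ _ => measure_ne_top _ _]
      _ ≤ (1 - p) ^ (k + 1) := by rw [pow_succ']; gcongr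

lemma exists_measure_window_lt_mul [IsProbabilityMeasure μ] (hf : Measurable f) {n : ℕ}
    (hn : 0 < n) {p : ℝ≥0∞} (hp : p ≤ 1) (hlt : n / p < ∫⁻ ω, (f ω : ℝ≥0∞) ∂μ) :
    ∃ k : ℕ, μ {ω | k * n < f ω ∧ f ω ≤ k * n + n} < p * μ {ω | k * n < f ω} := by
  by_contra! h
  have : NeZero n := ⟨hn.ne'⟩
  refine hlt.not_ge ?_
  calc ∫⁻ ω, (f ω : ℝ≥0∞) ∂μ ≤ n * ∑' k : ℕ, μ {ω | k * n < f ω} :=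
        lintegral_natCast_le_mul_tsum_measure_lt_mul hf n
    _ ≤ n * ∑' k : ℕ, (1 - p) ^ k := by
        gcongr with k; exact measure_lt_mul_le_pow hf h k
    _ = n / p := by
        rw [ENNReal.tsum_geometric, ENNReal.sub_sub_cancel ENNReal.one_ne_top hp, div_eq_mul_inv]

end TailSums

section Delay

variable {α : Type*} [MeasurableSpace α] {μ : Measure α} {T : α → ℕ}

/-- `E_μ[T - ν | T > ν]`, which is `0` when `μ(T > ν) = 0`. -/
def condDelay (μ : Measure α) (T : α → ℕ) (ν : ℕ) : ℝ≥0∞ :=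
  (∫⁻ ω in {ω | ν < T ω}, ((T ω - ν : ℕ) : ℝ≥0∞) ∂μ) / μ {ω | ν < T ω}

lemma mul_measure_lt_le_setLIntegral (hT : Measurable T) (ν n : ℕ) :
    n * μ {ω | ν + n < T ω} ≤ ∫⁻ ω in {ω | ν < T ω}, ((T ω - ν : ℕ) : ℝ≥0∞) ∂μ :=
  calc n * μ {ω | ν + n < T ω} = ∫⁻ _ in {ω | ν + n < T ω}, (n : ℝ≥0∞) ∂μ :=
        (setLIntegral_const _ _).symm
    _ ≤ ∫⁻ ω in {ω | ν + n < T ω}, ((T ω - ν : ℕ) : ℝ≥0∞) ∂μ :=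
        setLIntegral_mono' (measurableSet_lt measurable_const hT) fun ω hω => by
          simp only [Set.mem_ofPred_eq] at hω; exact_mod_cast (by omega : n ≤ T ω - ν)
    _ ≤ ∫⁻ ω in {ω | ν < T ω}, ((T ω - ν : ℕ) : ℝ≥0∞) ∂μ :=
        lintegral_mono_set fun ω (hω : ν + n < T ω) => show ν < T ω by omega

lemma mul_one_sub_le_condDelay (hT : Measurable T) {ν n : ℕ} {b : ℝ≥0∞}
    (hS0 : μ {ω | ν < T ω} ≠ 0) (hS : μ {ω | ν < T ω} ≠ ∞)
    (hW : μ {ω | ν < T ω ∧ T ω ≤ ν + n} ≤ b * μ {ω | ν < T ω}) :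
    n * (1 - b) ≤ condDelay μ T ν := by
  have hsplit : {ω | ν + n < T ω} = {ω | ν < T ω} \ {ω | ν < T ω ∧ T ω ≤ ν + n} := by
    ext ω; simp only [Set.mem_sdiff, Set.mem_ofPred_eq]; grind
  have hW_meas : MeasurableSet {ω | ν < T ω ∧ T ω ≤ ν + n} :=
    (measurableSet_lt measurable_const hT).inter (measurableSet_le hT measurable_const)
  have htail : (1 - b) * μ {ω | ν < T ω} ≤ μ {ω | ν + n < T ω} :=
    calc (1 - b) * μ {ω | ν < T ω} = μ {ω | ν < T ω} - b * μ {ω | ν < T ω} := by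
          rw [ENNReal.sub_mul fun _ _ => hS, one_mul]
      _ ≤ μ {ω | ν < T ω} - μ {ω | ν < T ω ∧ T ω ≤ ν + n} := tsub_le_tsub_left hW _
      _ = μ {ω | ν + n < T ω} := by
          rw [hsplit, measure_sdiff (s₁ := {ω | ν < T ω}) (fun _ hω => hω.1)
            hW_meas.nullMeasurableSet (measure_ne_top_of_subset (fun _ hω => hω.1) hS)]
  rw [condDelay, ENNReal.le_div_iff_mul_le (Or.inl hS0) (Or.inl hS), mul_assoc]
  exact (mul_le_mul_right htail _).trans (mul_measure_lt_le_setLIntegral hT ν n)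

end Delay

section StoppingTime

variable [MeasurableSpace X] {T : (ℕ → X) → ℕ}

lemma measurableSet_filt_lt (hT : ∀ n, MeasurableSet[filt X n] {ω | T ω ≤ n}) (ν : ℕ) :
    MeasurableSet[filt X ν] {ω | ν < T ω} := by
  simpa only [Set.compl_ofPred, not_le] using (hT ν).compl

lemma measurable_of_measurableSet_filt_le (hT : ∀ n, MeasurableSet[filt X n] {ω | T ω ≤ n}) :
    Measurable T :=
  measurable_of_Iic fun n => filt_le n _ (hT n)

variable [Fintype X] [MeasurableSingletonClass X]
  (Pinf : Measure (ℕ → X)) [IsFiniteMeasure Pinf] (Pc : ℕ → Measure (ℕ → X))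

lemma condDelay_ge_of_hazard_le {ν n : ℕ} {a b : ℝ≥0∞} {c : ℝ}
    (hagree : ∀ xs : Fin ν → X, Pc ν (cylEvent xs) = Pinf (cylEvent xs))
    (hT : ∀ n, MeasurableSet[filt X n] {ω | T ω ≤ n}) (hS : 0 < Pinf {ω | ν < T ω})
    (hwin : ENNReal.ofReal (exp c) * Pinf {ω | ν < T ω ∧ T ω ≤ ν + n} ≤
      a * Pinf {ω | ν < T ω})
    (hlik : Pc ν ({ω | (c : EReal) ≤ lam Pinf Pc ν (ν + n) ω} ∩ {ω | ν < T ω}) ≤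
      b * Pc ν {ω | ν < T ω}) :
    n * (1 - (a + b)) ≤ condDelay (Pc ν) T ν := by
  set S := {ω | ν < T ω}
  set W := {ω | ν < T ω ∧ T ω ≤ ν + n}
  set L := {ω | (c : EReal) ≤ lam Pinf Pc ν (ν + n) ω}
  have hSν : MeasurableSet[filt X ν] S := measurableSet_filt_lt hT ν
  have hPcS : Pc ν S = Pinf S := measure_eq_of_forall_cylEvent hagree hSν
  have hWL : MeasurableSet[filt X (ν + n)] (W \ L) :=
    ((filt_mono (Nat.le_add_right ν n) _ hSν).inter (hT (ν + n))).diff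
      (measurableSet_filt_le_lam Pinf Pc ν _)
  have hW : Pc ν W ≤ (a + b) * Pc ν S :=
    calc Pc ν W ≤ Pc ν (W \ L) + Pc ν (L ∩ S) :=
          (measure_mono fun ω hω => by by_cases hL : ω ∈ L <;> simp_all [W, S]).trans
            (measure_union_le _ _)
      _ ≤ ENNReal.ofReal (exp c) * Pinf W + b * Pc ν S := by
          gcongr
          exact (measure_le_exp_mul_of_lam_lt Pinf Pc hWL fun ω hω => not_le.mp hω.2).trans
            (by gcongr; exact Set.sdiff_subset)
      _ ≤ (a + b) * Pc ν S := by rw [add_mul, hPcS]; gcongr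
  exact mul_one_sub_le_condDelay (measurable_of_measurableSet_filt_le hT)
    (hPcS ▸ hS.ne') (hPcS ▸ measure_ne_top _ _) hW

end StoppingTime

section Asymptotics

lemma eventually_mul_log_add_mul_rpow_lt {θ : ℝ} (hθ : θ < 1) (a b : ℝ) :
    ∀ᶠ x in atTop, (a * log x + b) * x ^ θ < x := by
  have hsmall : (fun x => a * log x + b) =o[atTop] fun x => x ^ (1 - θ) :=
    ((isLittleO_log_rpow_atTop (by linarith)).const_mul_left a).add
      (Asymptotics.isLittleO_const_left.mpr
        (Or.inr (tendsto_abs_atTop_atTop.comp (tendsto_rpow_atTop (by linarith)))))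
  have hmul : (fun x => (a * log x + b) * x ^ θ) =o[atTop] fun x => x :=
    (hsmall.mul_isBigO (Asymptotics.isBigO_refl (fun x => x ^ θ) _)).congr' .rfl
      (by filter_upwards [eventually_gt_atTop 0] with x hx; rw [← rpow_add hx]; simp)
  filter_upwards [hmul.def one_half_pos, eventually_gt_atTop 0] with x hx hx0
  rw [norm_of_nonneg hx0.le] at hx
  linarith [le_norm_self ((a * log x + b) * x ^ θ)]

lemma eventually_exists_window {c κ a : ℝ} (hc : 0 ≤ c) (hκ : 0 < κ) (hθ : c * κ < 1)
    (ha : 0 < a) (N : ℕ) :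
    ∀ᶠ γ in atTop, ∃ n : ℕ, N ≤ n ∧ 0 < n ∧ n * exp (c * n) / a < γ ∧ κ * log γ ≤ n := by
  filter_upwards [(tendsto_log_atTop.const_mul_atTop hκ).eventually_ge_atTop ((N : ℝ) + 1),
    eventually_mul_log_add_mul_rpow_lt hθ (exp c / a * κ) (exp c / a),
    eventually_gt_atTop 0] with γ hN hlt hγ
  have hκn : κ * log γ ≤ ⌈κ * log γ⌉₊ := Nat.le_ceil _
  have hnκ : (⌈κ * log γ⌉₊ : ℝ) ≤ κ * log γ + 1 := (Nat.ceil_lt_add_one (by linarith)).le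
  refine ⟨⌈κ * log γ⌉₊, by exact_mod_cast (by linarith : (N : ℝ) ≤ ⌈κ * log γ⌉₊),
    by exact_mod_cast (by linarith : (0 : ℝ) < ⌈κ * log γ⌉₊), ?_, hκn⟩
  calc (⌈κ * log γ⌉₊ : ℝ) * exp (c * ⌈κ * log γ⌉₊) / a
      ≤ (κ * log γ + 1) * exp (c * (κ * log γ + 1)) / a := by
        gcongr
        linarith
    _ = (exp c / a * κ * log γ + exp c / a) * γ ^ (c * κ) := by
        rw [rpow_def_of_pos hγ]; rw [show c * (κ * log γ + 1) = log γ * (c * κ) + c by ring,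
          exp_add]; ring
    _ < γ := hlt

lemma one_sub_mul_one_sub_mul_div_le {ε δ I L : ℝ} {n : ℕ} (hε : ε ≤ 1) (hδ : δ ≤ 1) (hI : 0 < I)
    (hL : 0 ≤ L) (hn : (1 - ε) * (1 - δ / 2) / I * L ≤ n) :
    (1 - ε) * (1 - δ) * L / I ≤ n * (1 - 2 * (δ / 4)) :=
  calc (1 - ε) * (1 - δ) * L / I ≤ (1 - ε) * (1 - δ / 2) ^ 2 * L / I := by
        gcongr
        nlinarith [sq_nonneg δ]
    _ = (1 - ε) * (1 - δ / 2) / I * L * (1 - δ / 2) := by ring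
    _ ≤ n * (1 - 2 * (δ / 4)) := by
        rw [show 1 - 2 * (δ / 4) = 1 - δ / 2 by ring]
        gcongr
        linarith

end Asymptotics

section Lai

variable [MeasurableSpace X] [Fintype X] [MeasurableSingletonClass X]
  (Pinf : Measure (ℕ → X)) (Pc : ℕ → Measure (ℕ → X))

lemma eventually_measure_le_lam_inter_le [IsFiniteMeasure Pinf]
    (hagree : ∀ (ν : ℕ) (xs : Fin ν → X), Pc ν (cylEvent xs) = Pinf (cylEvent xs)) {b : ℝ}
    (hcond : Tendsto
      (fun n : ℕ => ⨆ ν : ℕ, ⨆ xs : {xs : Fin ν → X // 0 < Pinf (cylEvent xs)},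
        Pc ν ({ω | ∃ t : ℕ, 1 ≤ t ∧ t ≤ n ∧ ((b * n : ℝ) : EReal) ≤ lam Pinf Pc ν (ν + t) ω} ∩
          cylEvent xs.1) / Pc ν (cylEvent xs.1))
      atTop (nhds 0))
    {a : ℝ≥0∞} (ha : 0 < a) :
    ∀ᶠ n : ℕ in atTop, ∀ (ν : ℕ) (A : Set (ℕ → X)), MeasurableSet[filt X ν] A →
      Pc ν ({ω | ((b * n : ℝ) : EReal) ≤ lam Pinf Pc ν (ν + n) ω} ∩ A) ≤ a * Pc ν A := by
  filter_upwards [hcond.eventually_lt_const ha, eventually_ge_atTop 1] with n hn hn1 ν A hA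
  refine measure_inter_le_mul_of_cond_le (fun xs => hagree ν xs ▸ measure_ne_top _ _) hA
    fun xs hpos => ?_
  have hsub : {ω | ((b * n : ℝ) : EReal) ≤ lam Pinf Pc ν (ν + n) ω} ⊆
      {ω | ∃ t : ℕ, 1 ≤ t ∧ t ≤ n ∧ ((b * n : ℝ) : EReal) ≤ lam Pinf Pc ν (ν + t) ω} :=
    fun ω hω => ⟨n, hn1, le_rfl, hω⟩
  refine (ENNReal.div_le_div_right (measure_mono (Set.inter_subset_inter_left _ hsub)) _).trans
    (le_trans ?_ hn.le)
  exact le_iSup_of_le ν (le_iSup_of_le ⟨xs, hagree ν xs ▸ hpos⟩ le_rfl)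

lemma exists_condDelay_ge [IsProbabilityMeasure Pinf]
    (hagree : ∀ (ν : ℕ) (xs : Fin ν → X), Pc ν (cylEvent xs) = Pinf (cylEvent xs))
    {T : (ℕ → X) → ℕ} (hT : ∀ n, MeasurableSet[filt X n] {ω | T ω ≤ n})
    {n : ℕ} (hn : 0 < n) {c a : ℝ} (hc : 0 ≤ c) (ha0 : 0 < a) (ha1 : a ≤ 1)
    (hlik : ∀ ν, Pc ν ({ω | ((c * n : ℝ) : EReal) ≤ lam Pinf Pc ν (ν + n) ω} ∩ {ω | ν < T ω}) ≤
      ENNReal.ofReal a * Pc ν {ω | ν < T ω})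
    (hET : ENNReal.ofReal (n * exp (c * n) / a) < ∫⁻ ω, (T ω : ℝ≥0∞) ∂Pinf) :
    ∃ ν, 0 < Pinf {ω | ν < T ω} ∧ ENNReal.ofReal (n * (1 - 2 * a)) ≤ condDelay (Pc ν) T ν := by
  set p := ENNReal.ofReal (a * exp (-(c * n)))
  have hp : p ≤ 1 := ENNReal.ofReal_le_one.mpr
    (mul_le_one₀ ha1 (exp_pos _).le (exp_le_one_iff.mpr (by simp only [neg_nonpos]; positivity)))
  have hnp : (n : ℝ≥0∞) / p = ENNReal.ofReal (n * exp (c * n) / a) := by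
    rw [← ENNReal.ofReal_natCast, ← ENNReal.ofReal_div_of_pos (by positivity), exp_neg]
    field_simp
  obtain ⟨k, hk⟩ := exists_measure_window_lt_mul (measurable_of_measurableSet_filt_le hT) hn hp
    (hnp ▸ hET)
  have hS : 0 < Pinf {ω | k * n < T ω} := pos_of_ne_zero fun h0 => by simp [h0] at hk
  have hwin : ENNReal.ofReal (exp (c * n)) * Pinf {ω | k * n < T ω ∧ T ω ≤ k * n + n} ≤
      ENNReal.ofReal a * Pinf {ω | k * n < T ω} :=
    calc _ ≤ ENNReal.ofReal (exp (c * n)) * (p * Pinf {ω | k * n < T ω}) :=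
          mul_le_mul_right hk.le _
      _ = ENNReal.ofReal a * Pinf {ω | k * n < T ω} := by
        rw [← mul_assoc, ← ENNReal.ofReal_mul (exp_pos _).le, exp_neg]
        field_simp
  refine ⟨k * n, hS, le_of_eq_of_le ?_
    (condDelay_ge_of_hazard_le Pinf Pc (hagree _) hT hS hwin (hlik _))⟩
  rw [ENNReal.ofReal_mul n.cast_nonneg, ENNReal.ofReal_natCast,
    ENNReal.ofReal_sub _ (by positivity), ENNReal.ofReal_one, two_mul,
    ENNReal.ofReal_add ha0.le ha0.le]

end Lai

theorem lai_delay_lower_bound_general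
    [Fintype X] [MeasurableSpace X] [DiscreteMeasurableSpace X]
    (Pinf : Measure (ℕ → X)) [IsProbabilityMeasure Pinf]
    (Pc : ℕ → Measure (ℕ → X))
    (hagree : ∀ (ν : ℕ) (xs : Fin ν → X), Pc ν (cylEvent xs) = Pinf (cylEvent xs))
    (I : ℝ) (hI : 0 < I) (ε : ℝ) (hε0 : 0 < ε) (hε1 : ε < 1)
    (hcond : Tendsto
      (fun n : ℕ => ⨆ ν : ℕ, ⨆ xs : {xs : Fin ν → X // 0 < Pinf (cylEvent xs)},
        Pc ν ({ω | ∃ t : ℕ, 1 ≤ t ∧ t ≤ n ∧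
            (((1 + ε) * I * n : ℝ) : EReal) ≤ lam Pinf Pc ν (ν + t) ω} ∩
          cylEvent xs.1) / Pc ν (cylEvent xs.1))
      atTop (nhds 0)) :
    ∀ δ : ℝ, 0 < δ → δ < 1 → ∃ K₀ : ℝ,
      ∀ T : (ℕ → X) → ℕ, (∀ ω, 1 ≤ T ω) →
        (∀ n : ℕ, MeasurableSet[filt X n] {ω | T ω ≤ n}) →
        ENNReal.ofReal K₀ ≤ ∫⁻ ω, (T ω : ℝ≥0∞) ∂Pinf →
        ∫⁻ ω, (T ω : ℝ≥0∞) ∂Pinf < ⊤ →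
        ENNReal.ofReal
            ((1 - ε) * (1 - δ) *
              Real.log (∫⁻ ω, (T ω : ℝ≥0∞) ∂Pinf).toReal / I) ≤
          ⨆ ν : ℕ, ⨆ _ : 0 < Pinf {ω | ν < T ω},
            (∫⁻ ω in {ω | ν < T ω}, ((T ω - ν : ℕ) : ℝ≥0∞) ∂(Pc ν)) /
              Pc ν {ω | ν < T ω} := by
  intro δ hδ0 hδ1
  have hκ : 0 < (1 - ε) * (1 - δ / 2) / I := div_pos (by nlinarith) hI
  have hθ : (1 + ε) * I * ((1 - ε) * (1 - δ / 2) / I) < 1 := by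
    rw [mul_div_assoc', div_lt_one hI]
    nlinarith [mul_pos hI (show 0 < 1 - (1 - ε ^ 2) * (1 - δ / 2) by nlinarith)]
  obtain ⟨N, hN⟩ := eventually_atTop.mp (eventually_measure_le_lam_inter_le Pinf Pc hagree hcond
    (ENNReal.ofReal_pos.mpr (by positivity : 0 < δ / 4)))
  obtain ⟨K₀, hK₀⟩ := eventually_atTop.mp ((eventually_exists_window (by positivity) hκ hθ
    (by positivity : 0 < δ / 4) N).and (eventually_ge_atTop 1))
  refine ⟨K₀, fun T _ hT hTK hTfin => ?_⟩
  obtain ⟨⟨n, hNn, hn, hnγ, hκn⟩, hγ⟩ :=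
    hK₀ _ ((ENNReal.ofReal_le_iff_le_toReal hTfin.ne).mp hTK)
  obtain ⟨ν, hS, hν⟩ := exists_condDelay_ge Pinf Pc hagree hT hn (by positivity) (by positivity)
    (by linarith) (fun ν => hN n hNn ν _ (measurableSet_filt_lt hT ν))
    ((ENNReal.ofReal_lt_iff_lt_toReal (by positivity) hTfin.ne).mpr hnγ)
  refine le_iSup₂_of_le ν hS (le_trans (ENNReal.ofReal_le_ofReal ?_) hν)
  exact one_sub_mul_one_sub_mul_div_le hε1.le hδ1.le hI (log_nonneg hγ) hκn

/-- **Asymptotic lower bound on the worst-case detection delay (classical form of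
Lai's theorem).**  Under the likelihood-growth condition, every stopping time `T`
with `K₀ ≤ E_∞[T] < ∞` satisfies
`sup_ν E_ν[T − ν | T > ν] ≥ (1−ε)(1−δ)·log E_∞[T]/I`. -/
theorem lai_delay_lower_bound
    [Fintype X] [Nonempty X] [MeasurableSpace X] [DiscreteMeasurableSpace X]
    (Pinf : Measure (ℕ → X)) [IsProbabilityMeasure Pinf]
    (Pc : ℕ → Measure (ℕ → X)) (hPcprob : ∀ ν, IsProbabilityMeasure (Pc ν))
    (hagree : ∀ (ν : ℕ) (xs : Fin ν → X), Pc ν (cylEvent xs) = Pinf (cylEvent xs))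
    (habs : ∀ (ν n : ℕ) (xs : Fin n → X),
      0 < Pc ν (cylEvent xs) → 0 < Pinf (cylEvent xs))
    (I : ℝ) (hI : 0 < I) (ε : ℝ) (hε0 : 0 < ε) (hε1 : ε < 1)
    (hcond : Tendsto
      (fun n : ℕ => ⨆ ν : ℕ, ⨆ xs : {xs : Fin ν → X // 0 < Pinf (cylEvent xs)},
        Pc ν ({ω | ∃ t : ℕ, 1 ≤ t ∧ t ≤ n ∧
            (((1 + ε) * I * n : ℝ) : EReal) ≤ lam Pinf Pc ν (ν + t) ω} ∩
          cylEvent xs.1) / Pc ν (cylEvent xs.1))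
      atTop (nhds 0)) :
    ∀ δ : ℝ, 0 < δ → δ < 1 → ∃ K₀ : ℝ,
      ∀ T : (ℕ → X) → ℕ, (∀ ω, 1 ≤ T ω) →
        (∀ n : ℕ, MeasurableSet[filt X n] {ω | T ω ≤ n}) →
        ENNReal.ofReal K₀ ≤ ∫⁻ ω, (T ω : ℝ≥0∞) ∂Pinf →
        ∫⁻ ω, (T ω : ℝ≥0∞) ∂Pinf < ⊤ →
        ENNReal.ofReal
            ((1 - ε) * (1 - δ) *
              Real.log (∫⁻ ω, (T ω : ℝ≥0∞) ∂Pinf).toReal / I) ≤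
          ⨆ ν : ℕ, ⨆ _ : 0 < Pinf {ω | ν < T ω},
            (∫⁻ ω in {ω | ν < T ω}, ((T ω - ν : ℕ) : ℝ≥0∞) ∂(Pc ν)) /
              Pc ν {ω | ν < T ω} :=
  lai_delay_lower_bound_general Pinf Pc hagree I hI ε hε0 hε1 hcond

end QCPD
end
end
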